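/- arXiv:1411.7847 — 10 statements merged into one kernel-verified Lean document; each statement's English description precedes it below -/
import Mathlib

section
/- Let R be a ring with unity, let p, a, q, m ∈ R, let m' ∈ R satisfy m*m'*m = m, and suppose there exist p', q' ∈ R with p'*p*m = m and m*q*q' = m. If a is invertible along p*m*q, then u = m*q*a*p + 1 − m*m' is invertible in R. -/
/-- `b` is an inverse of `a` along `d`. -/
def InvAlong {S : Type*} [Ring S] (a d b : S) : Prop :=
  d * a * b = d ∧ b * a * d = d ∧ (∃ x, b = x * d) ∧ (∃ y, b = d * y)

/-- Jacobson's lemma. -/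
theorem jac_aux {R : Type*} [Ring R] {A B : R} (h : IsUnit (1 + A * B)) :
    IsUnit (1 + B * A) := by
  obtain ⟨u, hu⟩ := h
  have h1 : (1 + A * B) * (↑u⁻¹ : R) = 1 := by rw [← hu]; exact u.mul_inv
  have h2 : (↑u⁻¹ : R) * (1 + A * B) = 1 := by rw [← hu]; exact u.inv_mul
  refine ⟨⟨1 + B * A, 1 - B * ((↑u⁻¹ : R) * A), ?_, ?_⟩, rfl⟩
  · calc (1 + B * A) * (1 - B * ((↑u⁻¹ : R) * A))
        = 1 + B * A - B * (((1 + A * B) * (↑u⁻¹ : R)) * A) := by noncomm_ring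
      _ = 1 := by rw [h1]; noncomm_ring
  · calc (1 - B * ((↑u⁻¹ : R) * A)) * (1 + B * A)
        = 1 + B * A - B * (((↑u⁻¹ : R) * (1 + A * B)) * A) := by noncomm_ring
      _ = 1 := by rw [h2]; noncomm_ring

/-- If `b` is an inverse of `a` along a regular element `d` (with inner inverse `e`),
then `d*a + 1 - d*e` is a unit. -/
theorem unit_aux {R : Type*} [Ring R] (a d e b x y : R)
    (hde : d * e * d = d) (h1 : d * a * b = d) (h2 : b * a * d = d)
    (hx : b = x * d) (hy : b = d * y) :
    IsUnit (d * a + 1 - d * e) := by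
  have hdez : ∀ z : R, d * (e * (d * z)) = d * z := fun z => by
    rw [← mul_assoc, ← mul_assoc, hde]
  have hde' : d * (e * d) = d := by rw [← mul_assoc, hde]
  have h1z : ∀ z : R, d * (a * (b * z)) = d * z := fun z => by
    rw [← mul_assoc, ← mul_assoc, h1]
  have h1' : d * (a * b) = d := by rw [← mul_assoc, h1]
  have h2z : ∀ z : R, b * (a * (d * z)) = d * z := fun z => by
    rw [← mul_assoc, ← mul_assoc, h2]
  have h2' : b * (a * d) = d := by rw [← mul_assoc, h2]
  have hbed : b * (e * d) = b := by rw [hx, mul_assoc, hde']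
  have hbedz : ∀ z : R, b * (e * (d * z)) = b * z := fun z => by
    rw [hx, mul_assoc, hdez, ← mul_assoc]
  have hdeb : d * (e * b) = b := by rw [hy]; exact hdez y
  have hdebz : ∀ z : R, d * (e * (b * z)) = b * z := fun z => by
    rw [hy, mul_assoc d y z]; exact hdez (y * z)
  -- right inverse of U := d*a + 1 - d*e
  have hUv : (d * a + 1 - d * e) * (b * e + 1 - d * e)
      = 1 + (d * a - d * (a * (d * e))) := by
    simp only [mul_add, add_mul, mul_sub, sub_mul, mul_one, one_mul, mul_assoc,
      h1z, h2z, hdez, hde', h1', h2', hbed, hbedz, hdeb, hdebz]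
    abel
  have hn2 : (d * a - d * (a * (d * e))) * (d * a - d * (a * (d * e))) = 0 := by
    simp only [mul_add, add_mul, mul_sub, sub_mul, mul_one, one_mul, mul_assoc,
      h1z, h2z, hdez, hde', h1', h2', hbed, hbedz, hdeb, hdebz]
    abel
  have hUr : (d * a + 1 - d * e) *
      ((b * e + 1 - d * e) * (1 - (d * a - d * (a * (d * e))))) = 1 := by
    rw [← mul_assoc, hUv]
    have hexp : (1 + (d * a - d * (a * (d * e)))) * (1 - (d * a - d * (a * (d * e))))
        = 1 - (d * a - d * (a * (d * e))) * (d * a - d * (a * (d * e))) := by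
      noncomm_ring
    rw [hexp, hn2, sub_zero]
  -- left inverse of V := a*d + 1 - e*d
  have hl0 : (e * b + 1 - e * d) * (a * d + 1 - e * d)
      = 1 + (a * d - e * (d * (a * d))) := by
    simp only [mul_add, add_mul, mul_sub, sub_mul, mul_one, one_mul, mul_assoc,
      h1z, h2z, hdez, hde', h1', h2', hbed, hbedz, hdeb, hdebz]
    abel
  have hn'2 : (a * d - e * (d * (a * d))) * (a * d - e * (d * (a * d))) = 0 := by
    simp only [mul_add, add_mul, mul_sub, sub_mul, mul_one, one_mul, mul_assoc,
      h1z, h2z, hdez, hde', h1', h2', hbed, hbedz, hdeb, hdebz]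
    abel
  have hlV : ((1 - (a * d - e * (d * (a * d)))) * (e * b + 1 - e * d)) *
      (a * d + 1 - e * d) = 1 := by
    rw [mul_assoc, hl0]
    have hexp : (1 - (a * d - e * (d * (a * d)))) * (1 + (a * d - e * (d * (a * d))))
        = 1 - (a * d - e * (d * (a * d))) * (a * d - e * (d * (a * d))) := by
      noncomm_ring
    rw [hexp, hn'2, sub_zero]
  -- transfer the right inverse of U to a right inverse of V
  set r : R := (b * e + 1 - d * e) * (1 - (d * a - d * (a * (d * e)))) with hr
  have hVs : (a * d + 1 - e * d) * (1 - (a - e) * (r * d)) = 1 := by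
    calc (a * d + 1 - e * d) * (1 - (a - e) * (r * d))
        = 1 + (a - e) * d - (a - e) * (((d * a + 1 - d * e) * r) * d) := by noncomm_ring
      _ = 1 := by rw [hUr]; noncomm_ring
  -- V is a unit
  set l : R := (1 - (a * d - e * (d * (a * d)))) * (e * b + 1 - e * d) with hl
  set s : R := 1 - (a - e) * (r * d) with hs
  have hls : l = s := by
    rw [← mul_one l, ← hVs, ← mul_assoc, hlV, one_mul]
  have hVunit : IsUnit (a * d + 1 - e * d) :=
    ⟨⟨a * d + 1 - e * d, s, hVs, by rw [← hls]; exact hlV⟩, rfl⟩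
  -- Jacobson back to U
  have e0 : a * d + 1 - e * d = 1 + (a - e) * d := by noncomm_ring
  rw [e0] at hVunit
  have hU' : IsUnit (1 + d * (a - e)) := jac_aux hVunit
  have e4 : 1 + d * (a - e) = d * a + 1 - d * e := by noncomm_ring
  rwa [e4] at hU'

/-- If `a` is invertible along `p*m*q` (with `m` regular, `m ≤_L p*m`, `m ≤_R m*q`),
then `u = m*q*a*p + 1 - m*m'` is invertible. -/
theorem stmt1 {R : Type*} [Ring R] (p a q m m' p' q' : R)
    (hm : m * m' * m = m) (hp : p' * p * m = m) (hq : m * q * q' = m)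
    (ha : ∃ b, InvAlong a (p * m * q) b) :
    IsUnit (m * q * a * p + 1 - m * m') := by
  obtain ⟨b, hdab, hbad, ⟨x, hx⟩, ⟨y, hy⟩⟩ := ha
  have hmz : ∀ z : R, m * (m' * (m * z)) = m * z := fun z => by
    rw [← mul_assoc, ← mul_assoc, hm]
  have hpz : ∀ z : R, p' * (p * (m * z)) = m * z := fun z => by
    rw [← mul_assoc, ← mul_assoc, hp]
  have hqz : ∀ z : R, m * (q * (q' * z)) = m * z := fun z => by
    rw [← mul_assoc, ← mul_assoc, hq]
  have hde : (p * m * q) * (q' * (m' * p')) * (p * m * q) = p * m * q := by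
    simp only [mul_assoc]
    rw [hqz, hpz, hmz]
  have hU : IsUnit ((p * m * q) * a + 1 - (p * m * q) * (q' * (m' * p'))) :=
    unit_aux a (p * m * q) (q' * (m' * p')) b x y hde hdab hbad hx hy
  have h5 : (p * m * q) * (q' * (m' * p')) = p * m * (m' * p') := by
    simp only [mul_assoc]; rw [hqz]
  have e1 : (p * m * q) * a + 1 - (p * m * q) * (q' * (m' * p'))
      = 1 + (p * m) * (q * a - m' * p') := by
    rw [h5]; noncomm_ring
  rw [e1] at hU
  have hU2 : IsUnit (1 + (q * a - m' * p') * (p * m)) := jac_aux hU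
  have hppm : p' * (p * m) = m := by rw [← mul_assoc]; exact hp
  have e2 : 1 + (q * a - m' * p') * (p * m) = 1 + (q * a * p - m') * m := by
    calc 1 + (q * a - m' * p') * (p * m)
        = 1 + q * (a * (p * m)) - m' * (p' * (p * m)) := by noncomm_ring
      _ = 1 + q * (a * (p * m)) - m' * m := by rw [hppm]
      _ = 1 + (q * a * p - m') * m := by noncomm_ring
  rw [e2] at hU2
  have hU3 : IsUnit (1 + m * (q * a * p - m')) := jac_aux hU2
  have e3 : 1 + m * (q * a * p - m') = m * q * a * p + 1 - m * m' := by noncomm_ring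
  rwa [e3] at hU3
end

section
/- Let R be a ring with unity, let p, a, q, m ∈ R, let m' ∈ R satisfy m*m'*m = m, and suppose there exist p', q' ∈ R with p'*p*m = m and m*q*q' = m. If u = m*q*a*p + 1 − m*m' is invertible in R with inverse u⁻¹, then b = p*u⁻¹*m*q is the inverse of a along p*m*q; that is, (p*m*q)*a*b = p*m*q = b*a*(p*m*q) and there exist x, y ∈ R with b = x*(p*m*q) and b = (p*m*q)*y. -/
section UnitIdentities

variable {R : Type*} [Ring R] {m m' c ui : R}

theorem mul_mul_eq_of_mul_inv_eq_one (hm : m * m' * m = m)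
    (hu : (m * c + 1 - m * m') * ui = 1) : m * c * ui = m * m' := by
  have he : m * m' * (m * c + 1 - m * m') = m * c := by
    have h : m * m' * (m * c + 1 - m * m') = m * m' * m * c + m * m' - m * m' * m * m' := by
      noncomm_ring
    rw [h, hm]; abel
  calc m * c * ui = m * m' * ((m * c + 1 - m * m') * ui) := by rw [← mul_assoc, he]
    _ = m * m' := by rw [hu, mul_one]

theorem inv_mul_mul_mul_eq_of_inv_mul_eq_one (hm : m * m' * m = m)
    (hu : ui * (m * c + 1 - m * m') = 1) : ui * (m * c * m) = m := by
  have he : (m * c + 1 - m * m') * m = m * c * m := by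
    have h : (m * c + 1 - m * m') * m = m * c * m + m - m * m' * m := by noncomm_ring
    rw [h, hm]; abel
  calc ui * (m * c * m) = ui * (m * c + 1 - m * m') * m := by rw [mul_assoc ui _ m, he]
    _ = m := by rw [hu, one_mul]

theorem inv_mul_eq_of_mul_inv_eq_one (hm : m * m' * m = m)
    (hu : (m * c + 1 - m * m') * ui = 1) : ui * m = m * m' * (ui * m) := by
  have he : (1 - m * m') * (m * c + 1 - m * m') = 1 - m * m' := by
    have h : (1 - m * m') * (m * c + 1 - m * m')
        = m * c + 1 - m * m' - (m * m' * m * c + m * m' - m * m' * m * m') := by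
      noncomm_ring
    rw [h, hm]; abel
  have hui : (1 - m * m') * ui = 1 - m * m' :=
    calc (1 - m * m') * ui = (1 - m * m') * (m * c + 1 - m * m') * ui := by rw [he]
      _ = 1 - m * m' := by rw [mul_assoc, hu, mul_one]
  have h0 : (1 - m * m') * ui * m = 0 := by
    rw [hui, sub_mul, one_mul, hm, sub_self]
  rw [sub_mul, one_mul, sub_mul, mul_assoc (m * m'), sub_eq_zero] at h0
  exact h0

end UnitIdentities

theorem invAlong_mul_mul {R : Type*} [Ring R] {p a q m m' p' q' v : R}
    (hm : m * m' * m = m) (hp : p' * p * m = m) (hq : m * q * q' = m)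
    (hdab : m * (q * a * p) * v = m * m') (hbad : v * (m * (q * a * p) * m) = m)
    (hv : v * m = m * m' * (v * m)) :
    InvAlong a (p * m * q) (p * v * m * q) := by
  refine ⟨?_, ?_, ⟨p * v * p', ?_⟩, ⟨q' * m' * v * m * q, ?_⟩⟩
  · calc p * m * q * a * (p * v * m * q) = p * (m * (q * a * p) * v) * m * q := by noncomm_ring
      _ = p * (m * m' * m) * q := by rw [hdab]; noncomm_ring
      _ = p * m * q := by rw [hm]
  · calc p * v * m * q * a * (p * m * q) = p * (v * (m * (q * a * p) * m)) * q := by noncomm_ring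
      _ = p * m * q := by rw [hbad]
  · calc p * v * m * q = p * v * (p' * p * m) * q := by rw [hp]
      _ = p * v * p' * (p * m * q) := by noncomm_ring
  · calc p * v * m * q = p * (v * m) * q := by noncomm_ring
      _ = p * (m * q * q') * (m' * v * m * q) := by rw [hv, hq]; noncomm_ring
      _ = p * m * q * (q' * m' * v * m * q) := by noncomm_ring

/-- If `u = m*q*a*p + 1 - m*m'` is invertible with inverse `ui`, then `p*ui*m*q`
is the inverse of `a` along `p*m*q`. -/
theorem stmt2 {R : Type*} [Ring R] (p a q m m' p' q' ui : R)
    (hm : m * m' * m = m) (hp : p' * p * m = m) (hq : m * q * q' = m)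
    (hu1 : (m * q * a * p + 1 - m * m') * ui = 1)
    (hu2 : ui * (m * q * a * p + 1 - m * m') = 1) :
    InvAlong a (p * m * q) (p * ui * m * q) := by
  have hu1' : (m * (q * a * p) + 1 - m * m') * ui = 1 := by simpa only [mul_assoc] using hu1
  have hu2' : ui * (m * (q * a * p) + 1 - m * m') = 1 := by simpa only [mul_assoc] using hu2
  exact invAlong_mul_mul hm hp hq (mul_mul_eq_of_mul_inv_eq_one hm hu1')
    (inv_mul_mul_mul_eq_of_inv_mul_eq_one hm hu2') (inv_mul_eq_of_mul_inv_eq_one hm hu1')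
end

section
/- Let R be a ring with unity, let p, a, q, m ∈ R and let m' ∈ R satisfy m*m'*m = m. If u = m*q*a*p + 1 − m*m' and v = q*a*p*m + 1 − m'*m are both invertible in R, then p*u⁻¹*m*q = p*m*v⁻¹*q. -/
/-- If `u = m*q*a*p + 1 - m*m'` and `v = q*a*p*m + 1 - m'*m` are invertible with
inverses `ui` and `vi`, then `p*ui*m*q = p*m*vi*q`. -/
theorem stmt4 {R : Type*} [Ring R] (p a q m m' ui vi : R) (hm : m * m' * m = m)
    (hu1 : (m * q * a * p + 1 - m * m') * ui = 1)
    (hu2 : ui * (m * q * a * p + 1 - m * m') = 1)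
    (hv1 : (q * a * p * m + 1 - m' * m) * vi = 1)
    (hv2 : vi * (q * a * p * m + 1 - m' * m) = 1) :
    p * ui * m * q = p * m * vi * q := by
  have h : (m * q * a * p + 1 - m * m') * m = m * (q * a * p * m + 1 - m' * m) := by
    have : m * (m' * m) = m := by rw [← mul_assoc, hm]
    noncomm_ring
  have key : ui * m = m * vi := by
    calc ui * m = ui * m * ((q * a * p * m + 1 - m' * m) * vi) := by rw [hv1, mul_one]
    _ = ui * ((m * q * a * p + 1 - m * m') * m) * vi := by rw [h]; noncomm_ring
    _ = m * vi := by rw [← mul_assoc, hu2, one_mul]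
  calc p * ui * m * q = p * (ui * m) * q := by noncomm_ring
  _ = p * m * vi * q := by rw [key]; noncomm_ring
end

section
/- Let R be a ring with unity, let p, a, q, m ∈ R, let m' ∈ R satisfy m*m'*m = m, and suppose p is left invertible (there is p' with p'*p = 1) and q is right invertible (there is q' with q*q' = 1). Then a is invertible along p*m*q if and only if u = m*q*a*p + 1 − m*m' is invertible in R, if and only if v = q*a*p*m + 1 − m'*m is invertible in R; and in that case a^{∥pmq} = p*u⁻¹*m*q = p*m*v⁻¹*q. -/
section Aux

variable {R : Type*} [Ring R]

private lemma isUnit_of_li_ri (u w w' : R) (h1 : u * w = 1) (h2 : w' * u = 1) :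
    IsUnit u := by
  have hw : w' = w := by rw [← mul_one w', ← h1, ← mul_assoc, h2, one_mul]
  exact isUnit_iff_exists.mpr ⟨w, h1, hw ▸ h2⟩

/- Jacobson-style one-sided lemmas relating `u = m*q*a*p + 1 - m*m' = 1 + m*t` and
`v = q*a*p*m + 1 - m'*m = 1 + t*m` where `t = q*a*p - m'`. -/

private lemma j1 (a p q m m' c : R) (hc : (m * q * a * p + 1 - m * m') * c = 1) :
    (q * a * p * m + 1 - m' * m) * (1 - (q * a * p - m') * c * m) = 1 := by
  linear_combination (norm := noncomm_ring) -((q * a * p - m') * hc * m)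

private lemma j2 (a p q m m' c : R) (hc : c * (m * q * a * p + 1 - m * m') = 1) :
    (1 - (q * a * p - m') * c * m) * (q * a * p * m + 1 - m' * m) = 1 := by
  linear_combination (norm := noncomm_ring) -((q * a * p - m') * hc * m)

private lemma j3 (a p q m m' c : R) (hc : (q * a * p * m + 1 - m' * m) * c = 1) :
    (m * q * a * p + 1 - m * m') * (1 - m * c * (q * a * p - m')) = 1 := by
  linear_combination (norm := noncomm_ring) -(m * hc * (q * a * p - m'))

private lemma j4 (a p q m m' c : R) (hc : c * (q * a * p * m + 1 - m' * m) = 1) :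
    (1 - m * c * (q * a * p - m')) * (m * q * a * p + 1 - m * m') = 1 := by
  linear_combination (norm := noncomm_ring) -(m * hc * (q * a * p - m'))

/-- The explicit-formula part: if `ui`, `vi` are two-sided inverses of `u`, `v`
then `p*ui*m*q` is the inverse of `a` along `p*m*q` and equals `p*m*vi*q`. -/
private lemma part3 (p a q m m' p' q' ui vi : R)
    (hm : m * m' * m = m) (hp : p' * p = 1) (hq : q * q' = 1)
    (h1 : (m * q * a * p + 1 - m * m') * ui = 1)
    (h2 : ui * (m * q * a * p + 1 - m * m') = 1)
    (h3 : (q * a * p * m + 1 - m' * m) * vi = 1)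
    (h4 : vi * (q * a * p * m + 1 - m' * m) = 1) :
    InvAlong a (p * m * q) (p * ui * m * q) ∧ p * ui * m * q = p * m * vi * q := by
  have hum : (m * q * a * p + 1 - m * m') * m = m * (q * a * p * m + 1 - m' * m) := by
    noncomm_ring
  have key : ui * m = m * vi := by
    linear_combination (norm := noncomm_ring)
      -(ui * m * h3) - ui * hum * vi + h2 * (m * vi)
  have hA : m * m' * (m * q * a * p + 1 - m * m') = m * q * a * p := by
    linear_combination (norm := noncomm_ring) hm * (q * a * p) - hm * m'
  have hB : (m * q * a * p + 1 - m * m') * m = m * q * a * p * m := by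
    linear_combination (norm := noncomm_ring) -hm
  refine ⟨⟨?_, ?_, ⟨p * ui * m * m' * p', ?_⟩, ⟨q' * vi * q, ?_⟩⟩, ?_⟩
  · linear_combination (norm := noncomm_ring)
      -(p * hA * (ui * m * q)) + p * m * m' * h1 * (m * q) + p * hm * q
  · linear_combination (norm := noncomm_ring)
      -(p * ui * hB * q) + p * h2 * (m * q)
  · linear_combination (norm := noncomm_ring)
      -(p * ui * m * m' * hp * (m * q)) - p * ui * hm * q
  · linear_combination (norm := noncomm_ring)
      p * key * q - p * m * hq * (vi * q)
  · linear_combination (norm := noncomm_ring) p * key * q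

/-- Forward direction: existence of the inverse along `p*m*q` makes `u` a unit. -/
private lemma fwd (p a q m m' p' q' b x y : R)
    (hm : m * m' * m = m) (hp : p' * p = 1) (hq : q * q' = 1)
    (h1 : p * m * q * a * b = p * m * q) (h2 : b * a * (p * m * q) = p * m * q)
    (hx : b = x * (p * m * q)) (hy : b = p * m * q * y) :
    IsUnit (m * q * a * p + 1 - m * m') := by
  rw [hy] at h1
  rw [hx] at h2
  -- h1 : p*m*q*a*(p*m*q*y) = p*m*q ;  h2 : x*(p*m*q)*a*(p*m*q) = p*m*q
  have heq1 : m * q * a * p * (m * q * y * q') = m := by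
    linear_combination (norm := noncomm_ring)
      p' * h1 * q' - hp * (m * q * a * p * m * q * y * q') + hp * (m * q * q') + m * hq
  have heq2 : p' * x * p * m * (q * a * p) * m = m := by
    linear_combination (norm := noncomm_ring)
      p' * h2 * q' - (p' * x * p * m * q * a * p * m) * hq + hp * (m * q * q') + m * hq
  -- right inverse of u
  have e1 : (m * q * a * p + 1 - m * m') * (m * q * y * q' * m' + 1 - m * m')
      = 1 + m * q * a * p * (1 - m * m') := by
    linear_combination (norm := noncomm_ring)
      heq1 * m' - hm * (q * y * q' * m') + hm * m'
  have e2 : (m * q * a * p * (1 - m * m')) * (m * q * a * p * (1 - m * m')) = 0 := by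
    linear_combination (norm := noncomm_ring)
      -(m * q * a * p * hm * (q * a * p * (1 - m * m')))
  have e3 : (m * q * a * p + 1 - m * m') *
      ((m * q * y * q' * m' + 1 - m * m') * (1 - m * q * a * p * (1 - m * m'))) = 1 := by
    linear_combination (norm := noncomm_ring)
      e1 * (1 - m * q * a * p * (1 - m * m')) - e2
  -- left inverse of v
  have f1 : (m' * (p' * x * p) * m + 1 - m' * m) * (q * a * p * m + 1 - m' * m)
      = 1 + (1 - m' * m) * (q * a * p) * m := by
    linear_combination (norm := noncomm_ring)
      m' * heq2 - m' * (p' * x * p) * hm + m' * hm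
  have f2 : ((1 - m' * m) * (q * a * p) * m) * ((1 - m' * m) * (q * a * p) * m) = 0 := by
    linear_combination (norm := noncomm_ring)
      -((1 - m' * m) * (q * a * p) * hm * (q * a * p * m))
  have f3 : ((1 - (1 - m' * m) * (q * a * p) * m) * (m' * (p' * x * p) * m + 1 - m' * m)) *
      (q * a * p * m + 1 - m' * m) = 1 := by
    linear_combination (norm := noncomm_ring)
      (1 - (1 - m' * m) * (q * a * p) * m) * f1 - f2
  have hL := j4 a p q m m'
    ((1 - (1 - m' * m) * (q * a * p) * m) * (m' * (p' * x * p) * m + 1 - m' * m)) f3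
  exact isUnit_of_li_ri _ _ _ e3 hL

end Aux

/-- Corollary: with `p` left invertible and `q` right invertible, `a` is invertible
along `p*m*q` iff `u = m*q*a*p + 1 - m*m'` is invertible iff `v = q*a*p*m + 1 - m'*m`
is invertible; and then `a^{∥pmq} = p*u⁻¹*m*q = p*m*v⁻¹*q`. -/
theorem stmt5 {R : Type*} [Ring R] (p a q m m' p' q' : R)
    (hm : m * m' * m = m) (hp : p' * p = 1) (hq : q * q' = 1) :
    ((∃ b, InvAlong a (p * m * q) b) ↔ IsUnit (m * q * a * p + 1 - m * m')) ∧
    (IsUnit (m * q * a * p + 1 - m * m') ↔ IsUnit (q * a * p * m + 1 - m' * m)) ∧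
    (∀ ui vi : R,
      (m * q * a * p + 1 - m * m') * ui = 1 → ui * (m * q * a * p + 1 - m * m') = 1 →
      (q * a * p * m + 1 - m' * m) * vi = 1 → vi * (q * a * p * m + 1 - m' * m) = 1 →
      InvAlong a (p * m * q) (p * ui * m * q) ∧ p * ui * m * q = p * m * vi * q) := by
  refine ⟨⟨?_, ?_⟩, ⟨?_, ?_⟩, ?_⟩
  · rintro ⟨b, h1, h2, ⟨x, hx⟩, ⟨y, hy⟩⟩
    exact fwd p a q m m' p' q' b x y hm hp hq h1 h2 hx hy
  · intro hU
    obtain ⟨c, hc1, hc2⟩ := isUnit_iff_exists.mp hU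
    exact ⟨p * c * m * q,
      (part3 p a q m m' p' q' c (1 - (q * a * p - m') * c * m) hm hp hq hc1 hc2
        (j1 a p q m m' c hc1) (j2 a p q m m' c hc2)).1⟩
  · intro hU
    obtain ⟨c, hc1, hc2⟩ := isUnit_iff_exists.mp hU
    exact isUnit_iff_exists.mpr ⟨1 - (q * a * p - m') * c * m,
      j1 a p q m m' c hc1, j2 a p q m m' c hc2⟩
  · intro hV
    obtain ⟨c, hc1, hc2⟩ := isUnit_iff_exists.mp hV
    exact isUnit_iff_exists.mpr ⟨1 - m * c * (q * a * p - m'),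
      j3 a p q m m' c hc1, j4 a p q m m' c hc2⟩
  · intro ui vi h1 h2 h3 h4
    exact part3 p a q m m' p' q' ui vi hm hp hq h1 h2 h3 h4
end

section
/- Let R be a ring with unity, let a, m ∈ R and let m' ∈ R satisfy m*m'*m = m. Then a is invertible along m if and only if u = m*a + 1 − m*m' is invertible in R, if and only if v = a*m + 1 − m'*m is invertible in R; and in that case a^{∥m} = u⁻¹*m = m*v⁻¹, i.e., b = u⁻¹*m satisfies m*a*b = m = b*a*m, b = x*m and b = m*y for some x, y ∈ R. -/
/-- Jacobson-style lemma: if `1 + x*y` has a two-sided inverse `i`, then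
`1 + y*x` is a unit. -/
lemma jac_aux_s6 {R : Type*} [Ring R] (x y i : R)
    (h1 : (1 + x * y) * i = 1) (h2 : i * (1 + x * y) = 1) :
    IsUnit (1 + y * x) := by
  have e1 : (1 + y * x) * (1 - y * i * x) = 1 := by
    have e : (1 + y * x) * (1 - y * i * x) = 1 + y * x - y * ((1 + x * y) * i) * x := by
      noncomm_ring
    rw [e, h1]; noncomm_ring
  have e2 : (1 - y * i * x) * (1 + y * x) = 1 := by
    have e : (1 - y * i * x) * (1 + y * x) = 1 + y * x - y * (i * (1 + x * y)) * x := by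
      noncomm_ring
    rw [e, h2]; noncomm_ring
  exact ⟨⟨_, _, e1, e2⟩, rfl⟩

lemma key_aux {R : Type*} [Ring R] (a m m' ui : R) (hm : m * m' * m = m)
    (h1 : (m * a + 1 - m * m') * ui = 1) (h2 : ui * (m * a + 1 - m * m') = 1) :
    InvAlong a m (ui * m) := by
  have hmmu : (1 - m * m') * (m * a + 1 - m * m') = 1 - m * m' := by
    have e : (1 - m * m') * (m * a + 1 - m * m')
        = m * a + 1 - m * m' - (m * m' * m) * a - m * m' + (m * m' * m) * m' := by
      noncomm_ring
    rw [e, hm]; noncomm_ring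
  have h1' : (1 - m * m') * ui = 1 - m * m' := by
    calc (1 - m * m') * ui = ((1 - m * m') * (m * a + 1 - m * m')) * ui := by rw [hmmu]
    _ = (1 - m * m') * ((m * a + 1 - m * m') * ui) := by rw [mul_assoc]
    _ = 1 - m * m' := by rw [h1, mul_one]
  have maui : m * a * ui = m * m' := by
    have e : m * a * ui = (m * a + 1 - m * m') * ui - (1 - m * m') * ui := by noncomm_ring
    rw [h1, h1'] at e
    rw [e]; noncomm_ring
  have hum : (m * a + 1 - m * m') * m = m * a * m := by
    have e : (m * a + 1 - m * m') * m = m * a * m + m - m * m' * m := by noncomm_ring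
    rw [e, hm]; noncomm_ring
  refine ⟨?_, ?_, ⟨ui, rfl⟩, ?_⟩
  · rw [← mul_assoc, maui, hm]
  · calc ui * m * a * m = ui * ((m * a + 1 - m * m') * m) := by rw [hum]; noncomm_ring
    _ = (ui * (m * a + 1 - m * m')) * m := by rw [mul_assoc]
    _ = m := by rw [h2, one_mul]
  · have e2 : ui * m - m * (m' * (ui * m)) = m - m * m' * m := by
      calc ui * m - m * (m' * (ui * m)) = (1 - m * m') * ui * m := by noncomm_ring
      _ = (1 - m * m') * m := by rw [h1']
      _ = m - m * m' * m := by noncomm_ring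
    rw [hm, sub_self] at e2
    exact ⟨m' * (ui * m), (sub_eq_zero.mp e2)⟩

lemma fwd_aux {R : Type*} [Ring R] (a m m' b : R) (hm : m * m' * m = m)
    (hb : InvAlong a m b) : IsUnit (m * a + 1 - m * m') := by
  obtain ⟨h1, h2, ⟨x, hx⟩, ⟨y, hy⟩⟩ := hb
  have f1 : m * m' * b = b := by
    calc m * m' * b = (m * m' * m) * y := by rw [hy]; noncomm_ring
    _ = m * y := by rw [hm]
    _ = b := hy.symm
  have f2 : b * m' * m = b := by
    calc b * m' * m = x * (m * m' * m) := by rw [hx]; noncomm_ring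
    _ = x * m := by rw [hm]
    _ = b := hx.symm
  have e1 : (m * a + 1 - m * m') * (b * m' + 1 - b * a) = 1 := by
    have e : (m * a + 1 - m * m') * (b * m' + 1 - b * a)
        = (m * a * b) * m' + m * a - (m * a * b) * a + b * m' + 1 - b * a
          - (m * m' * b) * m' - m * m' + (m * m' * b) * a := by noncomm_ring
    rw [e, h1, f1]; noncomm_ring
  have e2 : (b * m' + 1 - b * a) * (m * a + 1 - m * m') = 1 := by
    have e : (b * m' + 1 - b * a) * (m * a + 1 - m * m')
        = (b * m' * m) * a + b * m' - (b * m' * m) * m' + m * a + 1 - m * m'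
          - (b * a * m) * a - b * a + (b * a * m) * m' := by noncomm_ring
    rw [e, f2, h2]; noncomm_ring
  exact ⟨⟨_, _, e1, e2⟩, rfl⟩

/-- Corollary (Mary–Patrício): `a` is invertible along a regular `m` iff
`u = m*a + 1 - m*m'` is invertible iff `v = a*m + 1 - m'*m` is invertible;
and then `a^{∥m} = u⁻¹*m = m*v⁻¹`. -/
theorem stmt6 {R : Type*} [Ring R] (a m m' : R) (hm : m * m' * m = m) :
    ((∃ b, InvAlong a m b) ↔ IsUnit (m * a + 1 - m * m')) ∧
    (IsUnit (m * a + 1 - m * m') ↔ IsUnit (a * m + 1 - m' * m)) ∧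
    (∀ ui vi : R,
      (m * a + 1 - m * m') * ui = 1 → ui * (m * a + 1 - m * m') = 1 →
      (a * m + 1 - m' * m) * vi = 1 → vi * (a * m + 1 - m' * m) = 1 →
      InvAlong a m (ui * m) ∧ ui * m = m * vi) := by
  have hum : (m * a + 1 - m * m') * m = m * a * m := by
    have e : (m * a + 1 - m * m') * m = m * a * m + m - m * m' * m := by noncomm_ring
    rw [e, hm]; noncomm_ring
  have hmv : m * (a * m + 1 - m' * m) = m * a * m := by
    have e : m * (a * m + 1 - m' * m) = m * a * m + m - m * m' * m := by noncomm_ring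
    rw [e, hm]; noncomm_ring
  refine ⟨⟨fun ⟨b, hb⟩ => fwd_aux a m m' b hm hb, fun hu => ?_⟩, ?_, ?_⟩
  · obtain ⟨U, hU⟩ := hu
    refine ⟨↑U⁻¹ * m, key_aux a m m' ↑U⁻¹ hm ?_ ?_⟩
    · rw [← hU]; exact U.mul_inv
    · rw [← hU]; exact U.inv_mul
  · have ru : m * a + 1 - m * m' = 1 + m * (a - m') := by noncomm_ring
    have rv : a * m + 1 - m' * m = 1 + (a - m') * m := by noncomm_ring
    rw [ru, rv]
    constructor
    · rintro ⟨U, hU⟩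
      exact jac_aux_s6 m (a - m') ↑U⁻¹ (by rw [← hU]; exact U.mul_inv)
        (by rw [← hU]; exact U.inv_mul)
    · rintro ⟨U, hU⟩
      exact jac_aux_s6 (a - m') m ↑U⁻¹ (by rw [← hU]; exact U.mul_inv)
        (by rw [← hU]; exact U.inv_mul)
  · intro ui vi h1 h2 h3 h4
    refine ⟨key_aux a m m' ui hm h1 h2, ?_⟩
    calc ui * m = (ui * m) * ((a * m + 1 - m' * m) * vi) := by rw [h3, mul_one]
    _ = ui * (m * (a * m + 1 - m' * m)) * vi := by rw [mul_assoc, mul_assoc, mul_assoc]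
    _ = ui * ((m * a + 1 - m * m') * m) * vi := by rw [hmv, hum]
    _ = (ui * (m * a + 1 - m * m')) * (m * vi) := by rw [← mul_assoc, ← mul_assoc, mul_assoc]
    _ = m * vi := by rw [h2, one_mul]
end

section
/- Let R be a ring with unity and let a, b, c, d, d1, d2, d3 ∈ R. Let A = [[a, c], [b, d]] and D = [[d1, d3], [d2, 0]] be 2×2 matrices over R. Assume d2⁺ is a reflexive inverse of d2, d3⁺ is a reflexive inverse of d3, w = (1 − d3*d3⁺)*d1*(1 − d2⁺*d2) is regular with inner inverse w⁻, and g is the inverse of c along d2. Set α = d1*c + d3*d − (1 − w*w⁻)*(1 − d3*d3⁺)*d1*d2⁺, β = d1*a + d3*b + (1 − w*w⁻)*(1 − d3*d3⁺), and ξ = β − α*g*a. If ξ is invertible in R with inverse ξ⁻¹, then the matrix B = [[ξ⁻¹*(d1 − α*g), ξ⁻¹*d3], [g*(1 − a*ξ⁻¹*(d1 − α*g)), −g*a*ξ⁻¹*d3]] is the inverse of A along D in the ring of 2×2 matrices over R. -/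
theorem my_close {S : Type*} [Ring S] {u v z : S} (hz : z = 0) (h : u - v = z) : u = v := by
  rw [← sub_eq_zero, h, hz]

set_option maxHeartbeats 4000000 in
/-- Formula for the inverse of `A = [[a,c],[b,d]]` along the `(2,2,0)` matrix
`D = [[d1,d3],[d2,0]]` when `ξ` is invertible with inverse `ξi`. -/
theorem stmt8 {R : Type*} [Ring R] (a b c d d1 d2 d3 d2p d3p w wm g α β ξ ξi : R)
    (hd2 : d2 * d2p * d2 = d2) (hd2' : d2p * d2 * d2p = d2p)
    (hd3 : d3 * d3p * d3 = d3) (hd3' : d3p * d3 * d3p = d3p)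
    (hw : w = (1 - d3 * d3p) * d1 * (1 - d2p * d2)) (hwm : w * wm * w = w)
    (hg : InvAlong c d2 g)
    (hα : α = d1 * c + d3 * d - (1 - w * wm) * (1 - d3 * d3p) * d1 * d2p)
    (hβ : β = d1 * a + d3 * b + (1 - w * wm) * (1 - d3 * d3p))
    (hξ : ξ = β - α * g * a)
    (hξ1 : ξ * ξi = 1) (hξ2 : ξi * ξ = 1) :
    InvAlong (!![a, c; b, d]) (!![d1, d3; d2, 0])
      (!![ξi * (d1 - α * g), ξi * d3;
          g * (1 - a * ξi * (d1 - α * g)), -(g * a * ξi * d3)]) := by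
  obtain ⟨hcg, hgc, ⟨x, hgx⟩, ⟨y, hgy⟩⟩ := hg
  have z_d2 : d2*d2p*d2 - d2 = 0 := sub_eq_zero_of_eq hd2
  have z_d3 : d3*d3p*d3 - d3 = 0 := sub_eq_zero_of_eq hd3
  have z_wm : w*wm*w - w = 0 := sub_eq_zero_of_eq hwm
  have z_hw : w - (1 - d3*d3p)*d1*(1 - d2p*d2) = 0 := sub_eq_zero_of_eq hw
  have z_cg : d2*c*g - d2 = 0 := sub_eq_zero_of_eq hcg
  have z_gc : g*c*d2 - d2 = 0 := sub_eq_zero_of_eq hgc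
  have z_gx : g - x*d2 = 0 := sub_eq_zero_of_eq hgx
  have z_gy : g - d2*y = 0 := sub_eq_zero_of_eq hgy
  have z_al : α - (d1*c + d3*d - (1 - w*wm)*(1 - d3*d3p)*d1*d2p) = 0 := sub_eq_zero_of_eq hα
  have z_be : β - (d1*a + d3*b + (1 - w*wm)*(1 - d3*d3p)) = 0 := sub_eq_zero_of_eq hβ
  have z_xi : ξ - (β - α*g*a) = 0 := sub_eq_zero_of_eq hξ
  have z_x1 : ξ*ξi - 1 = 0 := sub_eq_zero_of_eq hξ1
  have z_x2 : ξi*ξ - 1 = 0 := sub_eq_zero_of_eq hξ2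
  have z_S0a : (1 - d3*d3p)*(1 - d3*d3p) - (1 - d3*d3p) = 0 := by
    have h : (1 - d3*d3p)*(1 - d3*d3p) - (1 - d3*d3p) = (d3*d3p*d3 - d3)*d3p := by noncomm_ring
    rw [h, z_d3]
    first | simp | noncomm_ring | abel
  have z_S0b : (1 - d3*d3p)*w - w = 0 := by
    have h : (1 - d3*d3p)*w - w = (1 - d3*d3p)*(w - (1 - d3*d3p)*d1*(1 - d2p*d2)) - (w - (1 - d3*d3p)*d1*(1 - d2p*d2)) + ((1 - d3*d3p)*(1 - d3*d3p) - (1 - d3*d3p))*(d1*(1 - d2p*d2)) := by noncomm_ring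
    rw [h, z_hw, z_S0a]
    first | simp | noncomm_ring | abel
  have z_S1 : (1 - w*wm)*(1 - d3*d3p)*d3 = 0 := by
    have h : (1 - w*wm)*(1 - d3*d3p)*d3 = -((1 - w*wm)*(d3*d3p*d3 - d3)) := by noncomm_ring
    rw [h, z_d3]
    first | simp | noncomm_ring | abel
  have z_S2 : (1 - w*wm)*(1 - d3*d3p)*w = 0 := by
    have h : (1 - w*wm)*(1 - d3*d3p)*w = (1 - w*wm)*((1 - d3*d3p)*w - w) - (w*wm*w - w) := by noncomm_ring
    rw [h, z_S0b, z_wm]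
    first | simp | noncomm_ring | abel
  have z_S3 : (1 - w*wm)*(1 - d3*d3p)*((1 - w*wm)*(1 - d3*d3p)) - (1 - w*wm)*(1 - d3*d3p) = 0 := by
    have h : (1 - w*wm)*(1 - d3*d3p)*((1 - w*wm)*(1 - d3*d3p)) - (1 - w*wm)*(1 - d3*d3p) = (1 - w*wm)*((1 - d3*d3p)*(1 - d3*d3p) - (1 - d3*d3p)) - ((1 - w*wm)*(1 - d3*d3p)*w)*(wm*(1 - d3*d3p)) := by noncomm_ring
    rw [h, z_S0a, z_S2]
    first | simp | noncomm_ring | abel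
  have z_S4 : (1 - w*wm)*(1 - d3*d3p)*d1 - (1 - w*wm)*(1 - d3*d3p)*d1*(d2p*d2) = 0 := by
    have h : (1 - w*wm)*(1 - d3*d3p)*d1 - (1 - w*wm)*(1 - d3*d3p)*d1*(d2p*d2) = ((1 - w*wm)*(1 - d3*d3p)*w) - ((1 - w*wm)*(1 - d3*d3p))*(w - (1 - d3*d3p)*d1*(1 - d2p*d2)) - (1 - w*wm)*((1 - d3*d3p)*(1 - d3*d3p) - (1 - d3*d3p))*(d1*(1 - d2p*d2)) := by noncomm_ring
    rw [h, z_S2, z_hw, z_S0a]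
    first | simp | noncomm_ring | abel
  have z_S5 : (1 - w*wm)*(1 - d3*d3p)*d1*(c*g) - (1 - w*wm)*(1 - d3*d3p)*d1 = 0 := by
    have h : (1 - w*wm)*(1 - d3*d3p)*d1*(c*g) - (1 - w*wm)*(1 - d3*d3p)*d1 = -((1 - w*wm)*(1 - d3*d3p)*d1 - (1 - w*wm)*(1 - d3*d3p)*d1*(d2p*d2)) + (1 - w*wm)*(1 - d3*d3p)*d1*d2p*(d2*c*g - d2) + ((1 - w*wm)*(1 - d3*d3p)*d1 - (1 - w*wm)*(1 - d3*d3p)*d1*(d2p*d2))*(c*g) := by noncomm_ring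
    rw [h, z_S4, z_cg]
    first | simp | noncomm_ring | abel
  have z_S6 : (1 - w*wm)*(1 - d3*d3p)*(α*g) - ((1 - w*wm)*(1 - d3*d3p)*d1 - (1 - w*wm)*(1 - d3*d3p)*d1*(d2p*g)) = 0 := by
    have h : (1 - w*wm)*(1 - d3*d3p)*(α*g) - ((1 - w*wm)*(1 - d3*d3p)*d1 - (1 - w*wm)*(1 - d3*d3p)*d1*(d2p*g)) = (1 - w*wm)*(1 - d3*d3p)*(α - (d1*c + d3*d - (1 - w*wm)*(1 - d3*d3p)*d1*d2p))*g + ((1 - w*wm)*(1 - d3*d3p)*d3)*(d*g) - ((1 - w*wm)*(1 - d3*d3p)*((1 - w*wm)*(1 - d3*d3p)) - (1 - w*wm)*(1 - d3*d3p))*(d1*(d2p*g)) + ((1 - w*wm)*(1 - d3*d3p)*d1*(c*g) - (1 - w*wm)*(1 - d3*d3p)*d1) := by noncomm_ring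
    rw [h, z_al, z_S1, z_S3, z_S5]
    first | simp | noncomm_ring | abel
  have z_S7 : (1 - w*wm)*(1 - d3*d3p)*ξ - ((1 - w*wm)*(1 - d3*d3p) + (1 - w*wm)*(1 - d3*d3p)*d1*(d2p*(g*a))) = 0 := by
    have h : (1 - w*wm)*(1 - d3*d3p)*ξ - ((1 - w*wm)*(1 - d3*d3p) + (1 - w*wm)*(1 - d3*d3p)*d1*(d2p*(g*a))) = (1 - w*wm)*(1 - d3*d3p)*(ξ - (β - α*g*a)) + (1 - w*wm)*(1 - d3*d3p)*(β - (d1*a + d3*b + (1 - w*wm)*(1 - d3*d3p))) + ((1 - w*wm)*(1 - d3*d3p)*d3)*b + ((1 - w*wm)*(1 - d3*d3p)*((1 - w*wm)*(1 - d3*d3p)) - (1 - w*wm)*(1 - d3*d3p)) - ((1 - w*wm)*(1 - d3*d3p)*(α*g) - ((1 - w*wm)*(1 - d3*d3p)*d1 - (1 - w*wm)*(1 - d3*d3p)*d1*(d2p*g)))*a := by noncomm_ring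
    rw [h, z_xi, z_be, z_S1, z_S3, z_S6]
    first | simp | noncomm_ring | abel
  have z_T1 : (1 - d3*d3p)*d1*(d2p*g) - ((1 - d3*d3p)*d1*y - w*y) = 0 := by
    have h : (1 - d3*d3p)*d1*(d2p*g) - ((1 - d3*d3p)*d1*y - w*y) = (1 - d3*d3p)*d1*d2p*(g - d2*y) + (w - (1 - d3*d3p)*d1*(1 - d2p*d2))*y := by noncomm_ring
    rw [h, z_gy, z_hw]
    first | simp | noncomm_ring | abel
  have z_T2 : (1 - d3*d3p)*d1*(c*g) - ((1 - d3*d3p)*d1 - w + w*(c*g)) = 0 := by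
    have h : (1 - d3*d3p)*d1*(c*g) - ((1 - d3*d3p)*d1 - w + w*(c*g)) = (1 - d3*d3p)*d1*d2p*(d2*c*g - d2) - (w - (1 - d3*d3p)*d1*(1 - d2p*d2))*(c*g) + (w - (1 - d3*d3p)*d1*(1 - d2p*d2)) := by noncomm_ring
    rw [h, z_cg, z_hw]
    first | simp | noncomm_ring | abel
  have z_T3 : (1 - d3*d3p)*((1 - w*wm)*(1 - d3*d3p)) - ((1 - d3*d3p) - w*(wm*(1 - d3*d3p))) = 0 := by
    have h : (1 - d3*d3p)*((1 - w*wm)*(1 - d3*d3p)) - ((1 - d3*d3p) - w*(wm*(1 - d3*d3p))) = ((1 - d3*d3p)*(1 - d3*d3p) - (1 - d3*d3p)) - ((1 - d3*d3p)*w - w)*(wm*(1 - d3*d3p)) := by noncomm_ring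
    rw [h, z_S0a, z_S0b]
    first | simp | noncomm_ring | abel
  have z_T4 : (1 - d3*d3p)*(d1 - α*g) - (1 - d3*d3p)*(d1*y) - w*(1 - c*g - y - wm*((1 - d3*d3p)*(d1*(d2p*g)))) = 0 := by
    have h : (1 - d3*d3p)*(d1 - α*g) - (1 - d3*d3p)*(d1*y) - w*(1 - c*g - y - wm*((1 - d3*d3p)*(d1*(d2p*g)))) = -((1 - d3*d3p)*(α - (d1*c + d3*d - (1 - w*wm)*(1 - d3*d3p)*d1*d2p))*g) - ((1 - d3*d3p)*d1*(c*g) - ((1 - d3*d3p)*d1 - w + w*(c*g))) + (d3*d3p*d3 - d3)*(d*g) + ((1 - d3*d3p)*d1*(d2p*g) - ((1 - d3*d3p)*d1*y - w*y)) + ((1 - d3*d3p)*((1 - w*wm)*(1 - d3*d3p)) - ((1 - d3*d3p) - w*(wm*(1 - d3*d3p))))*(d1*(d2p*g)) := by noncomm_ring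
    rw [h, z_al, z_T2, z_d3, z_T1, z_T3]
    first | simp | noncomm_ring | abel
  have z_E : (1 - d3*d3p)*ξ - ((1 - d3*d3p) + (1 - d3*d3p)*(d1*(y*a)) + w*(a - c*(g*a) - y*a - wm*(1 - d3*d3p) - wm*((1 - d3*d3p)*(d1*(d2p*(g*a)))))) = 0 := by
    have h : (1 - d3*d3p)*ξ - ((1 - d3*d3p) + (1 - d3*d3p)*(d1*(y*a)) + w*(a - c*(g*a) - y*a - wm*(1 - d3*d3p) - wm*((1 - d3*d3p)*(d1*(d2p*(g*a)))))) = (1 - d3*d3p)*(ξ - (β - α*g*a)) + (1 - d3*d3p)*(β - (d1*a + d3*b + (1 - w*wm)*(1 - d3*d3p))) - (1 - d3*d3p)*(α - (d1*c + d3*d - (1 - w*wm)*(1 - d3*d3p)*d1*d2p))*(g*a) - (d3*d3p*d3 - d3)*b + (d3*d3p*d3 - d3)*(d*(g*a)) + ((1 - d3*d3p)*((1 - w*wm)*(1 - d3*d3p)) - ((1 - d3*d3p) - w*(wm*(1 - d3*d3p)))) + ((1 - d3*d3p)*((1 - w*wm)*(1 - d3*d3p)) - ((1 - d3*d3p) -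 w*(wm*(1 - d3*d3p))))*(d1*(d2p*(g*a))) - ((1 - d3*d3p)*d1*(c*g) - ((1 - d3*d3p)*d1 - w + w*(c*g)))*a + ((1 - d3*d3p)*d1*(d2p*g) - ((1 - d3*d3p)*d1*y - w*y))*a := by noncomm_ring
    rw [h, z_xi, z_be, z_al, z_d3, z_T3, z_T2, z_T1]
    first | simp | noncomm_ring | abel
  have z_EY1 : (1 - d3*d3p)*((ξi*(d1 - α*g)) - d1*(y*(1 - a*(ξi*(d1 - α*g))) + (1 - d2p*d2)*((1 - c*g - y - wm*((1 - d3*d3p)*(d1*(d2p*g)))) - (a - c*(g*a) - y*a - wm*(1 - d3*d3p) - wm*((1 - d3*d3p)*(d1*(d2p*(g*a)))))*(ξi*(d1 - α*g))))) = 0 := by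
    have h : (1 - d3*d3p)*((ξi*(d1 - α*g)) - d1*(y*(1 - a*(ξi*(d1 - α*g))) + (1 - d2p*d2)*((1 - c*g - y - wm*((1 - d3*d3p)*(d1*(d2p*g)))) - (a - c*(g*a) - y*a - wm*(1 - d3*d3p) - wm*((1 - d3*d3p)*(d1*(d2p*(g*a)))))*(ξi*(d1 - α*g))))) = -(((1 - d3*d3p)*ξ - ((1 - d3*d3p) + (1 - d3*d3p)*(d1*(y*a)) + w*(a - c*(g*a) - y*a - wm*(1 - d3*d3p) - wm*((1 - d3*d3p)*(d1*(d2p*(g*a)))))))*(ξi*(d1 - α*g))) + (1 - d3*d3p)*(ξ*ξi - 1)*(d1 - α*g) + ((1 - d3*d3p)*(d1 - α*g) - (1 - d3*d3p)*(d1*y) - w*(1 - c*g - y - wm*((1 - d3*d3p)*(d1*(d2p*g))))) + (w - (1 - d3*d3p)*d1*(1 - d2p*d2))*((1 - c*g - y - wm*((1 - d3*d3p)*(d1*(d2p*g)))) - (a - c*(g*a) - y*a - wm*(1 - d3*d3p) - wm*((1 - d3*d3p)*(d1*(d2p*(g*a)))))*(ξi*(d1 - α*g))) := by noncomm_ring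
    rw [h, z_E, z_x1, z_T4, z_hw]
    first | simp | noncomm_ring | abel
  have z_EY2 : (1 - d3*d3p)*(ξi*d3 - d1*(-(y*(a*(ξi*d3))) + (1 - d2p*d2)*(-((a - c*(g*a) - y*a - wm*(1 - d3*d3p) - wm*((1 - d3*d3p)*(d1*(d2p*(g*a)))))*(ξi*d3))))) = 0 := by
    have h : (1 - d3*d3p)*(ξi*d3 - d1*(-(y*(a*(ξi*d3))) + (1 - d2p*d2)*(-((a - c*(g*a) - y*a - wm*(1 - d3*d3p) - wm*((1 - d3*d3p)*(d1*(d2p*(g*a)))))*(ξi*d3))))) = -(d3*d3p*d3 - d3) + (1 - d3*d3p)*(ξ*ξi - 1)*d3 - ((1 - d3*d3p)*ξ - ((1 - d3*d3p) + (1 - d3*d3p)*(d1*(y*a)) + w*(a - c*(g*a) - y*a - wm*(1 - d3*d3p) - wm*((1 - d3*d3p)*(d1*(d2p*(g*a)))))))*(ξi*d3) + (w - (1 - d3*d3p)*d1*(1 - d2p*d2))*(-((a - c*(g*a) - y*a - wm*(1 - d3*d3p) - wm*((1 - d3*d3p)*(d1*(d2p*(g*a)))))*(ξi*d3))) := by 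noncomm_ring
    rw [h, z_d3, z_x1, z_E, z_hw]
    first | simp | noncomm_ring | abel
  have z_G1 : (d1*a + d3*b)*(ξi*(d1 - α*g)) + (d1*c + d3*d)*(g*(1 - a*(ξi*(d1 - α*g)))) - d1 = 0 := by
    have h : (d1*a + d3*b)*(ξi*(d1 - α*g)) + (d1*c + d3*d)*(g*(1 - a*(ξi*(d1 - α*g)))) - d1 = ((α - (d1*c + d3*d - (1 - w*wm)*(1 - d3*d3p)*d1*d2p))*(g*a) - (β - (d1*a + d3*b + (1 - w*wm)*(1 - d3*d3p))) - (ξ - (β - α*g*a)) + ((1 - w*wm)*(1 - d3*d3p)*ξ - ((1 - w*wm)*(1 - d3*d3p) + (1 - w*wm)*(1 - d3*d3p)*d1*(d2p*(g*a)))))*(ξi*(d1 - α*g)) + (1 - (1 - w*wm)*(1 - d3*d3p))*(ξ*ξi - 1)*(d1 - α*g) - (α - (d1*c + d3*d - (1 - w*wm)*(1 - d3*d3p)*d1*d2p))*g + ((1 - w*wm)*(1 - d3*d3p)*(α*g) - ((1 - w*wm)*(1 - d3*d3p)*d1 - (1 - w*wm)*(1 - d3*d3p)*d1*(d2p*g)))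 := by noncomm_ring
    rw [h, z_al, z_be, z_xi, z_S7, z_x1, z_S6]
    first | simp | noncomm_ring | abel
  have z_G2 : (d1*a + d3*b)*(ξi*d3) + (d1*c + d3*d)*(-(g*(a*(ξi*d3)))) - d3 = 0 := by
    have h : (d1*a + d3*b)*(ξi*d3) + (d1*c + d3*d)*(-(g*(a*(ξi*d3)))) - d3 = ((α - (d1*c + d3*d - (1 - w*wm)*(1 - d3*d3p)*d1*d2p))*(g*a) - (β - (d1*a + d3*b + (1 - w*wm)*(1 - d3*d3p))) - (ξ - (β - α*g*a)) + ((1 - w*wm)*(1 - d3*d3p)*ξ - ((1 - w*wm)*(1 - d3*d3p) + (1 - w*wm)*(1 - d3*d3p)*d1*(d2p*(g*a)))))*(ξi*d3) + (1 - (1 - w*wm)*(1 - d3*d3p))*(ξ*ξi - 1)*d3 - ((1 - w*wm)*(1 - d3*d3p)*d3) := by noncomm_ring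
    rw [h, z_al, z_be, z_xi, z_S7, z_x1, z_S1]
    first | simp | noncomm_ring | abel
  have z_G3 : (d2*a)*(ξi*(d1 - α*g)) + (d2*c)*(g*(1 - a*(ξi*(d1 - α*g)))) - d2 = 0 := by
    have h : (d2*a)*(ξi*(d1 - α*g)) + (d2*c)*(g*(1 - a*(ξi*(d1 - α*g)))) - d2 = (d2*c*g - d2)*(1 - a*(ξi*(d1 - α*g))) := by noncomm_ring
    rw [h, z_cg]
    first | simp | noncomm_ring | abel
  have z_G4 : (d2*a)*(ξi*d3) + (d2*c)*(-(g*(a*(ξi*d3)))) = 0 := by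
    have h : (d2*a)*(ξi*d3) + (d2*c)*(-(g*(a*(ξi*d3)))) = -((d2*c*g - d2)*(a*(ξi*d3))) := by noncomm_ring
    rw [h, z_cg]
    first | simp | noncomm_ring | abel
  have z_G5 : (ξi*(d1 - α*g))*(a*d1 + c*d2) + (ξi*d3)*(b*d1 + d*d2) - d1 = 0 := by
    have h : (ξi*(d1 - α*g))*(a*d1 + c*d2) + (ξi*d3)*(b*d1 + d*d2) - d1 = ξi*(-((1 - w*wm)*(1 - d3*d3p)*d1 - (1 - w*wm)*(1 - d3*d3p)*d1*(d2p*d2)) - (α - (d1*c + d3*d - (1 - w*wm)*(1 - d3*d3p)*d1*d2p))*d2 - α*(g*c*d2 - d2) - (β - (d1*a + d3*b + (1 - w*wm)*(1 - d3*d3p)))*d1 - (ξ - (β - α*g*a))*d1) + (ξi*ξ - 1)*d1 := by noncomm_ring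
    rw [h, z_S4, z_al, z_gc, z_be, z_xi, z_x2]
    first | simp | noncomm_ring | abel
  have z_G6 : (ξi*(d1 - α*g))*(a*d3) + (ξi*d3)*(b*d3) - d3 = 0 := by
    have h : (ξi*(d1 - α*g))*(a*d3) + (ξi*d3)*(b*d3) - d3 = (ξi*ξ - 1)*d3 - ξi*((1 - w*wm)*(1 - d3*d3p)*d3) + ξi*(-(ξ - (β - α*g*a)) - (β - (d1*a + d3*b + (1 - w*wm)*(1 - d3*d3p))))*d3 := by noncomm_ring
    rw [h, z_x2, z_S1, z_xi, z_be]
    first | simp | noncomm_ring | abel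
  have z_G7 : (g*(1 - a*(ξi*(d1 - α*g))))*(a*d1 + c*d2) + (-(g*(a*(ξi*d3))))*(b*d1 + d*d2) - d2 = 0 := by
    have h : (g*(1 - a*(ξi*(d1 - α*g))))*(a*d1 + c*d2) + (-(g*(a*(ξi*d3))))*(b*d1 + d*d2) - d2 = -(g*a)*((ξi*(d1 - α*g))*(a*d1 + c*d2) + (ξi*d3)*(b*d1 + d*d2) - d1) + (g*c*d2 - d2) := by noncomm_ring
    rw [h, z_G5, z_gc]
    first | simp | noncomm_ring | abel
  have z_G8 : (g*(1 - a*(ξi*(d1 - α*g))))*(a*d3) + (-(g*(a*(ξi*d3))))*(b*d3) = 0 := by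
    have h : (g*(1 - a*(ξi*(d1 - α*g))))*(a*d3) + (-(g*(a*(ξi*d3))))*(b*d3) = -(g*a)*((ξi*(d1 - α*g))*(a*d3) + (ξi*d3)*(b*d3) - d3) := by noncomm_ring
    rw [h, z_G6]
    first | simp | noncomm_ring | abel
  have z_X11 : ξi*d1 + (-(ξi*(α*x)))*d2 - (ξi*(d1 - α*g)) = 0 := by
    have h : ξi*d1 + (-(ξi*(α*x)))*d2 - (ξi*(d1 - α*g)) = ξi*α*(g - x*d2) := by noncomm_ring
    rw [h, z_gx]
    first | simp | noncomm_ring | abel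
  have z_X21 : (-(g*(a*ξi)))*d1 + ((1 + g*(a*(ξi*α)))*x)*d2 - g*(1 - a*(ξi*(d1 - α*g))) = 0 := by
    have h : (-(g*(a*ξi)))*d1 + ((1 + g*(a*(ξi*α)))*x)*d2 - g*(1 - a*(ξi*(d1 - α*g))) = -((1 + g*(a*(ξi*α)))*(g - x*d2)) := by noncomm_ring
    rw [h, z_gx]
    first | simp | noncomm_ring | abel
  have z_Y11 : d1*(y*(1 - a*(ξi*(d1 - α*g))) + (1 - d2p*d2)*((1 - c*g - y - wm*((1 - d3*d3p)*(d1*(d2p*g)))) - (a - c*(g*a) - y*a - wm*(1 - d3*d3p) - wm*((1 - d3*d3p)*(d1*(d2p*(g*a)))))*(ξi*(d1 - α*g)))) + d3*(d3p*((ξi*(d1 - α*g)) - d1*(y*(1 - a*(ξi*(d1 - α*g))) + (1 - d2p*d2)*((1 - c*g - y - wm*((1 - d3*d3p)*(d1*(d2p*g)))) - (a - c*(g*a) - y*a - wm*(1 - d3*d3p) - wm*((1 - d3*d3p)*(d1*(d2p*(g*a)))))*(ξi*(d1 - α*g)))))) - (ξi*(d1 - α*g)) = 0 := by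
    have h : d1*(y*(1 - a*(ξi*(d1 - α*g))) + (1 - d2p*d2)*((1 - c*g - y - wm*((1 - d3*d3p)*(d1*(d2p*g)))) - (a - c*(g*a) - y*a - wm*(1 - d3*d3p) - wm*((1 - d3*d3p)*(d1*(d2p*(g*a)))))*(ξi*(d1 - α*g)))) + d3*(d3p*((ξi*(d1 - α*g)) - d1*(y*(1 - a*(ξi*(d1 - α*g))) + (1 - d2p*d2)*((1 - c*g - y - wm*((1 - d3*d3p)*(d1*(d2p*g)))) - (a - c*(g*a) - y*a - wm*(1 - d3*d3p) - wm*((1 - d3*d3p)*(d1*(d2p*(g*a)))))*(ξi*(d1 - α*g)))))) - (ξi*(d1 - α*g)) = -((1 - d3*d3p)*((ξi*(d1 - α*g)) - d1*(y*(1 - a*(ξi*(d1 - α*g))) + (1 - d2p*d2)*((1 - c*g - y - wm*((1 - d3*d3p)*(d1*(d2p*g)))) - (a - c*(g*a) - y*a - wm*(1 - d3*d3p) - wm*((1 - d3*d3p)*(d1*(d2p*(g*a)))))*(ξi*(d1 - α*g)))))) := by noncomm_ring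
    rw [h, z_EY1]
    first | simp | noncomm_ring | abel
  have z_Y12 : d1*(-(y*(a*(ξi*d3))) + (1 - d2p*d2)*(-((a - c*(g*a) - y*a - wm*(1 - d3*d3p) - wm*((1 - d3*d3p)*(d1*(d2p*(g*a)))))*(ξi*d3)))) + d3*(d3p*(ξi*d3 - d1*(-(y*(a*(ξi*d3))) + (1 - d2p*d2)*(-((a - c*(g*a) - y*a - wm*(1 - d3*d3p) - wm*((1 - d3*d3p)*(d1*(d2p*(g*a)))))*(ξi*d3)))))) - ξi*d3 = 0 := by
    have h : d1*(-(y*(a*(ξi*d3))) + (1 - d2p*d2)*(-((a - c*(g*a) - y*a - wm*(1 - d3*d3p) - wm*((1 - d3*d3p)*(d1*(d2p*(g*a)))))*(ξi*d3)))) + d3*(d3p*(ξi*d3 - d1*(-(y*(a*(ξi*d3))) + (1 - d2p*d2)*(-((a - c*(g*a) - y*a - wm*(1 - d3*d3p) - wm*((1 - d3*d3p)*(d1*(d2p*(g*a)))))*(ξi*d3)))))) - ξi*d3 = -((1 - d3*d3p)*(ξi*d3 - d1*(-(y*(a*(ξi*d3))) + (1 - d2p*d2)*(-((a - c*(g*a)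 - y*a - wm*(1 - d3*d3p) - wm*((1 - d3*d3p)*(d1*(d2p*(g*a)))))*(ξi*d3)))))) := by noncomm_ring
    rw [h, z_EY2]
    first | simp | noncomm_ring | abel
  have z_Y21 : d2*(y*(1 - a*(ξi*(d1 - α*g))) + (1 - d2p*d2)*((1 - c*g - y - wm*((1 - d3*d3p)*(d1*(d2p*g)))) - (a - c*(g*a) - y*a - wm*(1 - d3*d3p) - wm*((1 - d3*d3p)*(d1*(d2p*(g*a)))))*(ξi*(d1 - α*g)))) - g*(1 - a*(ξi*(d1 - α*g))) = 0 := by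
    have h : d2*(y*(1 - a*(ξi*(d1 - α*g))) + (1 - d2p*d2)*((1 - c*g - y - wm*((1 - d3*d3p)*(d1*(d2p*g)))) - (a - c*(g*a) - y*a - wm*(1 - d3*d3p) - wm*((1 - d3*d3p)*(d1*(d2p*(g*a)))))*(ξi*(d1 - α*g)))) - g*(1 - a*(ξi*(d1 - α*g))) = -((g - d2*y)*(1 - a*(ξi*(d1 - α*g)))) - (d2*d2p*d2 - d2)*((1 - c*g - y - wm*((1 - d3*d3p)*(d1*(d2p*g)))) - (a - c*(g*a) - y*a - wm*(1 - d3*d3p) - wm*((1 - d3*d3p)*(d1*(d2p*(g*a)))))*(ξi*(d1 - α*g))) := by noncomm_ring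
    rw [h, z_gy, z_d2]
    first | simp | noncomm_ring | abel
  have z_Y22 : d2*(-(y*(a*(ξi*d3))) + (1 - d2p*d2)*(-((a - c*(g*a) - y*a - wm*(1 - d3*d3p) - wm*((1 - d3*d3p)*(d1*(d2p*(g*a)))))*(ξi*d3)))) - (-(g*(a*(ξi*d3)))) = 0 := by
    have h : d2*(-(y*(a*(ξi*d3))) + (1 - d2p*d2)*(-((a - c*(g*a) - y*a - wm*(1 - d3*d3p) - wm*((1 - d3*d3p)*(d1*(d2p*(g*a)))))*(ξi*d3)))) - (-(g*(a*(ξi*d3)))) = (g - d2*y)*(a*(ξi*d3)) - (d2*d2p*d2 - d2)*(-((a - c*(g*a) - y*a - wm*(1 - d3*d3p) - wm*((1 - d3*d3p)*(d1*(d2p*(g*a)))))*(ξi*d3))) := by noncomm_ring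
    rw [h, z_gy, z_d2]
    first | simp | noncomm_ring | abel
  refine ⟨?_, ?_, ⟨!![ξi, -(ξi*(α*x)); -(g*(a*ξi)), (1 + g*(a*(ξi*α)))*x], ?_⟩,
    ⟨!![(y*(1 - a*(ξi*(d1 - α*g))) + (1 - d2p*d2)*((1 - c*g - y - wm*((1 - d3*d3p)*(d1*(d2p*g)))) - (a - c*(g*a) - y*a - wm*(1 - d3*d3p) - wm*((1 - d3*d3p)*(d1*(d2p*(g*a)))))*(ξi*(d1 - α*g)))), (-(y*(a*(ξi*d3))) + (1 - d2p*d2)*(-((a - c*(g*a) - y*a - wm*(1 - d3*d3p) - wm*((1 - d3*d3p)*(d1*(d2p*(g*a)))))*(ξi*d3)))); (d3p*((ξi*(d1 - α*g)) - d1*(y*(1 - a*(ξi*(d1 - α*g))) + (1 - d2p*d2)*((1 - c*g - y - wm*((1 - d3*d3p)*(d1*(d2p*g)))) - (a - c*(g*a) - y*a - wm*(1 - d3*d3p) - wm*((1 - d3*d3p)*(d1*(d2p*(g*a)))))*(ξi*(d1 - α*g)))))), (d3p*(ξi*d3 - d1*(-(y*(a*(ξi*d3))) + (1 - d2p*d2)*(-((a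 - c*(g*a) - y*a - wm*(1 - d3*d3p) - wm*((1 - d3*d3p)*(d1*(d2p*(g*a)))))*(ξi*d3))))))], ?_⟩⟩
  · have h11 : (d1 * a + d3 * b) * (ξi * (d1 - α * g)) + (d1 * c + d3 * d) * (g * (1 - a * ξi * (d1 - α * g))) = d1 :=
      my_close z_G1 (by noncomm_ring)
    have h12 : (d1 * a + d3 * b) * (ξi * d3) + (d1 * c + d3 * d) * (-(g * a * ξi * d3)) = d3 :=
      my_close z_G2 (by noncomm_ring)
    have h21 : (d2 * a + 0 * b) * (ξi * (d1 - α * g)) + (d2 * c + 0 * d) * (g * (1 - a * ξi * (d1 - α * g))) = d2 :=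
      my_close z_G3 (by noncomm_ring)
    have h22 : (d2 * a + 0 * b) * (ξi * d3) + (d2 * c + 0 * d) * (-(g * a * ξi * d3)) = 0 :=
      my_close z_G4 (by noncomm_ring)
    rw [Matrix.mul_fin_two, Matrix.mul_fin_two, h11, h12, h21, h22]
  · have h11 : ((ξi * (d1 - α * g)) * a + (ξi * d3) * b) * d1 + ((ξi * (d1 - α * g)) * c + (ξi * d3) * d) * d2 = d1 :=
      my_close z_G5 (by noncomm_ring)
    have h12 : ((ξi * (d1 - α * g)) * a + (ξi * d3) * b) * d3 + ((ξi * (d1 - α * g)) * c + (ξi * d3) * d) * 0 = d3 :=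
      my_close z_G6 (by noncomm_ring)
    have h21 : ((g * (1 - a * ξi * (d1 - α * g))) * a + (-(g * a * ξi * d3)) * b) * d1 + ((g * (1 - a * ξi * (d1 - α * g))) * c + (-(g * a * ξi * d3)) * d) * d2 = d2 :=
      my_close z_G7 (by noncomm_ring)
    have h22 : ((g * (1 - a * ξi * (d1 - α * g))) * a + (-(g * a * ξi * d3)) * b) * d3 + ((g * (1 - a * ξi * (d1 - α * g))) * c + (-(g * a * ξi * d3)) * d) * 0 = 0 :=
      my_close z_G8 (by noncomm_ring)
    rw [Matrix.mul_fin_two, Matrix.mul_fin_two, h11, h12, h21, h22]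
  · have h11 : (ξi) * d1 + (-(ξi*(α*x))) * d2 = ξi * (d1 - α * g) :=
      my_close z_X11 (by noncomm_ring)
    have h12 : (ξi) * d3 + (-(ξi*(α*x))) * 0 = ξi * d3 := by noncomm_ring
    have h21 : (-(g*(a*ξi))) * d1 + ((1 + g*(a*(ξi*α)))*x) * d2 = g * (1 - a * ξi * (d1 - α * g)) :=
      my_close z_X21 (by noncomm_ring)
    have h22 : (-(g*(a*ξi))) * d3 + ((1 + g*(a*(ξi*α)))*x) * 0 = -(g * a * ξi * d3) := by noncomm_ring
    rw [Matrix.mul_fin_two, h11, h12, h21, h22]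
  · have h11 : d1 * (y*(1 - a*(ξi*(d1 - α*g))) + (1 - d2p*d2)*((1 - c*g - y - wm*((1 - d3*d3p)*(d1*(d2p*g)))) - (a - c*(g*a) - y*a - wm*(1 - d3*d3p) - wm*((1 - d3*d3p)*(d1*(d2p*(g*a)))))*(ξi*(d1 - α*g)))) + d3 * (d3p*((ξi*(d1 - α*g)) - d1*(y*(1 - a*(ξi*(d1 - α*g))) + (1 - d2p*d2)*((1 - c*g - y - wm*((1 - d3*d3p)*(d1*(d2p*g)))) - (a - c*(g*a) - y*a - wm*(1 - d3*d3p) - wm*((1 - d3*d3p)*(d1*(d2p*(g*a)))))*(ξi*(d1 - α*g)))))) = ξi * (d1 - α * g) :=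
      my_close z_Y11 (by noncomm_ring)
    have h12 : d1 * (-(y*(a*(ξi*d3))) + (1 - d2p*d2)*(-((a - c*(g*a) - y*a - wm*(1 - d3*d3p) - wm*((1 - d3*d3p)*(d1*(d2p*(g*a)))))*(ξi*d3)))) + d3 * (d3p*(ξi*d3 - d1*(-(y*(a*(ξi*d3))) + (1 - d2p*d2)*(-((a - c*(g*a) - y*a - wm*(1 - d3*d3p) - wm*((1 - d3*d3p)*(d1*(d2p*(g*a)))))*(ξi*d3)))))) = ξi * d3 :=
      my_close z_Y12 (by noncomm_ring)
    have h21 : d2 * (y*(1 - a*(ξi*(d1 - α*g))) + (1 - d2p*d2)*((1 - c*g - y - wm*((1 - d3*d3p)*(d1*(d2p*g)))) - (a - c*(g*a) - y*a - wm*(1 - d3*d3p) - wm*((1 - d3*d3p)*(d1*(d2p*(g*a)))))*(ξi*(d1 - α*g)))) + 0 * (d3p*((ξi*(d1 - α*g)) - d1*(y*(1 - a*(ξi*(d1 - α*g))) + (1 - d2p*d2)*((1 - c*g - y - wm*((1 - d3*d3p)*(d1*(d2p*g)))) - (a - c*(g*a) - y*a - wm*(1 - d3*d3p) - wm*((1 -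 d3*d3p)*(d1*(d2p*(g*a)))))*(ξi*(d1 - α*g)))))) = g * (1 - a * ξi * (d1 - α * g)) :=
      my_close z_Y21 (by noncomm_ring)
    have h22 : d2 * (-(y*(a*(ξi*d3))) + (1 - d2p*d2)*(-((a - c*(g*a) - y*a - wm*(1 - d3*d3p) - wm*((1 - d3*d3p)*(d1*(d2p*(g*a)))))*(ξi*d3)))) + 0 * (d3p*(ξi*d3 - d1*(-(y*(a*(ξi*d3))) + (1 - d2p*d2)*(-((a - c*(g*a) - y*a - wm*(1 - d3*d3p) - wm*((1 - d3*d3p)*(d1*(d2p*(g*a)))))*(ξi*d3)))))) = -(g * a * ξi * d3) :=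
      my_close z_Y22 (by noncomm_ring)
    rw [Matrix.mul_fin_two, h11, h12, h21, h22]
end

section
/- Let R be a ring with unity and let a, b, c, d, d1, d2, d3, d4 ∈ R. Let A = [[a, c], [b, d]] and D = [[d1, d3], [d2, d4]] be 2×2 matrices over R. Assume d4⁺ is a reflexive inverse of d4; set e = 1 − d4*d4⁺, f = 1 − d4⁺*d4 and s = d1 − d3*d4⁺*d2. Assume d3*f = 0, s⁺ is a reflexive inverse of s, t = e*d2*(1 − s⁺*s) is regular with inner inverse t⁻, and h is the inverse of a along s. Set α = d2*a + d4*b − (1 − t*t⁻)*e*d2*s⁺, β = (d2*a + d4*b)*d3*d4⁺ + d2*c + d4*d + (1 − t*t⁻)*e, and ξ = β − α*h*(a*d3*d4⁺ + c). Then A is invertible along D (in the ring of 2×2 matrices over R) if and only if ξ is invertible in R. -/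
theorem eq22 {R : Type*} [Ring R] {a b c d a' b' c' d' : R}
    (h1 : a = a') (h2 : b = b') (h3 : c = c') (h4 : d = d') :
    !![a,b;c,d] = !![a',b';c',d'] := by rw [h1,h2,h3,h4]

theorem add22 {R : Type*} [Ring R] (a b c d e f g h : R) :
    !![a,b;c,d] + !![e,f;g,h] = !![a+e, b+f; c+g, d+h] := by
  ext i j; fin_cases i <;> fin_cases j <;> simp

theorem sub22 {R : Type*} [Ring R] (a b c d e f g h : R) :
    !![a,b;c,d] - !![e,f;g,h] = !![a-e, b-f; c-g, d-h] := by
  ext i j; fin_cases i <;> fin_cases j <;> simp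

theorem mary_one {S : Type*} [Ring S] {a d di b : S} (hdi : d * di * d = d)
    (hb : InvAlong a d b) :
    (d*a + 1 - d*di) * (b*di + (1 - b*a)*(1 - d*di)) = 1 ∧
    (b*di + (1 - b*a)*(1 - d*di)) * (d*a + 1 - d*di) = 1 := by
  obtain ⟨h1, h2, ⟨x, hx⟩, ⟨y, hy⟩⟩ := hb
  have e1x : ∀ z, d*(di*(d*z)) = d*z := fun z => by rw [← mul_assoc, ← mul_assoc, hdi]
  have e1 : d*(di*d) = d := by rw [← mul_assoc, hdi]
  have e2x : ∀ z, d*(a*(b*z)) = d*z := fun z => by rw [← mul_assoc, ← mul_assoc, h1]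
  have e2 : d*(a*b) = d := by rw [← mul_assoc, h1]
  have e3x : ∀ z, b*(a*(d*z)) = d*z := fun z => by rw [← mul_assoc, ← mul_assoc, h2]
  have e3 : b*(a*d) = d := by rw [← mul_assoc, h2]
  have e4 : b*(di*d) = b := by
    rw [hx, mul_assoc x d (di*d), e1]
  have e4x : ∀ z, b*(di*(d*z)) = b*z := fun z => by
    rw [hx, mul_assoc x d (di*(d*z)), e1x z, mul_assoc]
  have e5 : d*(di*b) = b := by rw [hy]; exact e1x y
  have e5x : ∀ z, d*(di*(b*z)) = b*z := fun z => by
    rw [hy, mul_assoc d y z]; exact e1x (y*z)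
  constructor <;>
  · simp only [mul_add, add_mul, mul_sub, sub_mul, mul_one, one_mul, mul_assoc,
      e1x, e1, e2x, e2, e3x, e3, e4x, e4, e5x, e5]
    noncomm_ring

theorem mary_iff {S : Type*} [Ring S] (a d di : S) (hdi : d * di * d = d) :
    (∃ b, InvAlong a d b) ↔ IsUnit (d * a + 1 - d * di) := by
  constructor
  · rintro ⟨b, hb⟩
    obtain ⟨hw1, hw2⟩ := mary_one hdi hb
    exact ⟨⟨_, _, hw1, hw2⟩, rfl⟩
  · rintro ⟨U, hU⟩
    have hz : (1 - d*di) * d = 0 := by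
      have h' : (1 - d*di) * d = d - d*di*d := by noncomm_ring
      rw [h', hdi, sub_self]
    have key' : (1 - d*di) * (U : S) = 1 - d*di := by
      rw [hU]
      have h' : (1 - d*di) * (d*a + 1 - d*di)
          = d*a + 1 - d*di - (d*di*d)*a - d*di + (d*di*d)*di := by noncomm_ring
      rw [h', hdi]; noncomm_ring
    have key2 : (1 - d*di) * (↑U⁻¹ : S) = 1 - d*di := by
      calc (1 - d*di) * (↑U⁻¹ : S) = ((1 - d*di) * ↑U) * ↑U⁻¹ := by rw [key']
        _ = (1 - d*di) * (↑U * ↑U⁻¹) := by rw [mul_assoc]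
        _ = 1 - d*di := by rw [U.mul_inv, mul_one]
    have hda : d*a = (U : S) - (1 - d*di) := by rw [hU]; noncomm_ring
    refine ⟨(↑U⁻¹ : S) * d, ?_, ?_, ⟨(↑U⁻¹ : S), rfl⟩, ⟨di * ((↑U⁻¹ : S) * d), ?_⟩⟩
    · calc d*a*((↑U⁻¹ : S)*d) = ((U : S) - (1 - d*di))*(↑U⁻¹*d) := by rw [hda]
        _ = (U : S)*↑U⁻¹*d - ((1-d*di)*↑U⁻¹)*d := by noncomm_ring
        _ = d - (1-d*di)*d := by rw [U.mul_inv, one_mul, key2]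
        _ = d := by rw [hz, sub_zero]
    · have hdad : d*a*d = (U : S)*d := by
        rw [hU]
        have h' : (d*a + 1 - d*di)*d = d*a*d + (d - d*di*d) := by noncomm_ring
        rw [h', hdi, sub_self, add_zero]
      calc (↑U⁻¹ : S)*d*a*d = (↑U⁻¹ : S)*(d*a*d) := by noncomm_ring
        _ = (↑U⁻¹ : S)*((U : S)*d) := by rw [hdad]
        _ = d := by rw [← mul_assoc, U.inv_mul, one_mul]
    · have h0 : (1 - d*di)*((↑U⁻¹ : S)*d) = 0 := by
        rw [← mul_assoc, key2, hz]
      have h' : (1 - d*di)*((↑U⁻¹ : S)*d)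
          = (↑U⁻¹ : S)*d - d*(di*((↑U⁻¹ : S)*d)) := by noncomm_ring
      rw [h'] at h0
      exact sub_eq_zero.mp h0

set_option maxHeartbeats 4000000

/-- Existence criterion for the inverse of `A = [[a,c],[b,d]]` along
`D = [[d1,d3],[d2,d4]]` with `d4` regular and `d3*f = 0`. -/
theorem stmt9 {R : Type*} [Ring R] (a b c d d1 d2 d3 d4 d4p e f s sp t tm h α β ξ : R)
    (hd4 : d4 * d4p * d4 = d4) (hd4' : d4p * d4 * d4p = d4p)
    (he : e = 1 - d4 * d4p) (hf : f = 1 - d4p * d4)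
    (hs : s = d1 - d3 * d4p * d2)
    (hd3f : d3 * f = 0)
    (hsp : s * sp * s = s) (hsp' : sp * s * sp = sp)
    (ht : t = e * d2 * (1 - sp * s)) (htm : t * tm * t = t)
    (hh : InvAlong a s h)
    (hα : α = d2 * a + d4 * b - (1 - t * tm) * e * d2 * sp)
    (hβ : β = (d2 * a + d4 * b) * d3 * d4p + d2 * c + d4 * d + (1 - t * tm) * e)
    (hξ : ξ = β - α * h * (a * d3 * d4p + c)) :
    (∃ B : Matrix (Fin 2) (Fin 2) R,
        InvAlong (!![a, c; b, d]) (!![d1, d3; d2, d4]) B) ↔ IsUnit ξ := by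
  -- scalar preliminaries
  have hd3' : d3 * (d4p * d4) = d3 := by
    rw [hf] at hd3f
    have h' : d3 * (d4p*d4) = d3 - d3*(1 - d4p*d4) := by noncomm_ring
    rw [h', hd3f, sub_zero]
  have hss0 : s*(1 - sp*s) = 0 := by
    have h' : s*(1 - sp*s) = s - s*sp*s := by noncomm_ring
    rw [h', hsp, sub_self]
  have he4 : e*d4 = 0 := by
    have h' : (1 - d4*d4p)*d4 = d4 - d4*d4p*d4 := by noncomm_ring
    rw [he, h', hd4, sub_self]
  obtain ⟨hu1w1, hw1u1⟩ := mary_one hsp hh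
  have hw1s : (h*sp + (1 - h*a)*(1 - s*sp)) * s = h := by
    obtain ⟨_, _, ⟨x, hx⟩, _⟩ := hh
    have h1 : (h*sp + (1 - h*a)*(1 - s*sp))*s
        = h*(sp*s) + (1-h*a)*(s - s*sp*s) := by noncomm_ring
    rw [h1, hsp, sub_self, mul_zero, add_zero, hx]
    have h2 : x*s*(sp*s) = x*(s*sp*s) := by noncomm_ring
    rw [h2, hsp]
  -- abstract names
  obtain ⟨u1, hu1⟩ : ∃ z : R, z = s*a + 1 - s*sp := ⟨_, rfl⟩
  obtain ⟨w1, hw1⟩ : ∃ z : R, z = h*sp + (1 - h*a)*(1 - s*sp) := ⟨_, rfl⟩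
  rw [← hu1, ← hw1] at hu1w1 hw1u1
  rw [← hw1] at hw1s
  obtain ⟨L, hL⟩ : ∃ Z : Matrix (Fin 2) (Fin 2) R, Z = !![1, d3*d4p; 0, 1] := ⟨_, rfl⟩
  obtain ⟨Li, hLi⟩ : ∃ Z : Matrix (Fin 2) (Fin 2) R, Z = !![1, -(d3*d4p); 0, 1] := ⟨_, rfl⟩
  obtain ⟨M, hM⟩ : ∃ Z : Matrix (Fin 2) (Fin 2) R, Z = !![s, 0; d2, d4] := ⟨_, rfl⟩
  obtain ⟨K, hK⟩ : ∃ Z : Matrix (Fin 2) (Fin 2) R,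
      Z = !![s*sp, 0; (1 - t*tm)*(e*(d2*sp)), 1 - (1 - t*tm)*e] := ⟨_, rfl⟩
  obtain ⟨N, hN⟩ : ∃ Z : Matrix (Fin 2) (Fin 2) R,
      Z = !![sp - (1 - sp*s)*(tm*(e*(d2*sp))), (1 - sp*s)*(tm*e);
             d4p*(d2*((1 - sp*s)*(tm*(e*(d2*sp))))) - d4p*(d2*sp),
             d4p - d4p*(d2*((1 - sp*s)*(tm*e)))] := ⟨_, rfl⟩
  obtain ⟨W, hW⟩ : ∃ Z : Matrix (Fin 2) (Fin 2) R,
      Z = !![u1, s*(a*d3*d4p + c); α, β] := ⟨_, rfl⟩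
  obtain ⟨T, hT⟩ : ∃ Z : Matrix (Fin 2) (Fin 2) R,
      Z = !![u1, s*(a*d3*d4p + c); 0, ξ] := ⟨_, rfl⟩
  -- basic matrix facts
  have hLLi : L * Li = 1 := by
    rw [hL, hLi, Matrix.mul_fin_two, Matrix.one_fin_two]
    exact eq22 (by noncomm_ring) (by noncomm_ring) (by noncomm_ring) (by noncomm_ring)
  have hLiL : Li * L = 1 := by
    rw [hL, hLi, Matrix.mul_fin_two, Matrix.one_fin_two]
    exact eq22 (by noncomm_ring) (by noncomm_ring) (by noncomm_ring) (by noncomm_ring)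
  have hD : (!![d1,d3;d2,d4] : Matrix (Fin 2) (Fin 2) R) = L * M := by
    rw [hL, hM, Matrix.mul_fin_two]
    refine eq22 ?_ ?_ ?_ ?_
    · rw [hs]; noncomm_ring
    · have h' : (1:R)*0 + (d3*d4p)*d4 = d3*(d4p*d4) := by noncomm_ring
      rw [h', hd3']
    · noncomm_ring
    · noncomm_ring
  have hMN : M * N = K := by
    rw [hM, hN, hK, Matrix.mul_fin_two]
    refine eq22 ?_ ?_ ?_ ?_
    · have h' : s*(sp - (1 - sp*s)*(tm*(e*(d2*sp))))
          + 0*(d4p*(d2*((1 - sp*s)*(tm*(e*(d2*sp))))) - d4p*(d2*sp))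
          = s*sp - (s*(1 - sp*s))*(tm*(e*(d2*sp))) := by noncomm_ring
      rw [h', hss0, zero_mul, sub_zero]
    · have h' : s*((1 - sp*s)*(tm*e)) + 0*(d4p - d4p*(d2*((1 - sp*s)*(tm*e))))
          = (s*(1 - sp*s))*(tm*e) := by noncomm_ring
      rw [h', hss0, zero_mul]
    · have h' : d2*(sp - (1 - sp*s)*(tm*(e*(d2*sp))))
          + d4*(d4p*(d2*((1 - sp*s)*(tm*(e*(d2*sp))))) - d4p*(d2*sp))
          = (1 - d4*d4p)*(d2*sp)
            - ((1 - d4*d4p)*d2*(1 - sp*s))*(tm*(e*(d2*sp))) := by noncomm_ring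
      rw [h', ← he, ← ht]
      noncomm_ring
    · have h' : d2*((1 - sp*s)*(tm*e)) + d4*(d4p - d4p*(d2*((1 - sp*s)*(tm*e))))
          = d4*d4p + ((1 - d4*d4p)*d2*(1 - sp*s))*(tm*e) := by noncomm_ring
      rw [h', ← he, ← ht, he]
      noncomm_ring
  have hKM : K * M = M := by
    rw [hK, hM, Matrix.mul_fin_two]
    refine eq22 ?_ ?_ ?_ ?_
    · have h' : (s*sp)*s + 0*d2 = s*sp*s := by noncomm_ring
      rw [h', hsp]
    · noncomm_ring
    · have htm' : (e*d2*(1 - sp*s))*tm*(e*d2*(1 - sp*s)) = e*d2*(1 - sp*s) := by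
        rw [← ht]; exact htm
      have h' : ((1 - (e*d2*(1 - sp*s))*tm)*(e*(d2*sp)))*s + (1 - (1 - (e*d2*(1 - sp*s))*tm)*e)*d2
          = d2 - e*d2*(1 - sp*s) + (e*d2*(1 - sp*s))*tm*(e*d2*(1 - sp*s)) := by noncomm_ring
      rw [ht, h', htm']
      noncomm_ring
    · have h' : ((1 - t*tm)*(e*(d2*sp)))*0 + (1 - (1 - t*tm)*e)*d4
          = d4 - (1 - t*tm)*(e*d4) := by noncomm_ring
      rw [h', he4, mul_zero, sub_zero]
  have hAL : !![a,c;b,d] * L = !![a, a*(d3*d4p)+c; b, b*(d3*d4p)+d] := by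
    rw [hL, Matrix.mul_fin_two]
    exact eq22 (by noncomm_ring) (by noncomm_ring) (by noncomm_ring) (by noncomm_ring)
  have hF5 : M * !![a, a*(d3*d4p)+c; b, b*(d3*d4p)+d] + 1 - K = W := by
    rw [hM, hK, hW, Matrix.mul_fin_two, Matrix.one_fin_two, add22, sub22]
    refine eq22 ?_ ?_ ?_ ?_
    · rw [hu1]; noncomm_ring
    · noncomm_ring
    · rw [hα]; noncomm_ring
    · rw [hβ]; noncomm_ring
  -- the criterion matrix
  have hDND : !![d1,d3;d2,d4] * (N * Li) * !![d1,d3;d2,d4] = !![d1,d3;d2,d4] := by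
    rw [hD]
    have h1 : L*M*(N*Li)*(L*M) = L*((M*N)*((Li*L)*M)) := by noncomm_ring
    rw [h1, hMN, hLiL, one_mul, hKM]
  have hU : !![d1,d3;d2,d4] * !![a,c;b,d] + 1 - !![d1,d3;d2,d4] * (N * Li)
      = L * W * Li := by
    rw [hD]
    calc L*M*(!![a,c;b,d]) + 1 - L*M*(N*Li)
        = (L*M*(!![a,c;b,d]))*(L*Li) + L*Li - (L*(M*N))*Li := by
          rw [hLLi]; noncomm_ring
      _ = L*(M*((!![a,c;b,d])*L) + 1 - M*N)*Li := by noncomm_ring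
      _ = L*(M*((!![a,c;b,d])*L) + 1 - K)*Li := by rw [hMN]
      _ = L*W*Li := by rw [hAL, hF5]
  rw [mary_iff (!![a,c;b,d]) (!![d1,d3;d2,d4]) (N * Li) hDND, hU]
  -- units
  have hLu : IsUnit L := ⟨⟨L, Li, hLLi, hLiL⟩, rfl⟩
  have hLiu : IsUnit Li := ⟨⟨Li, L, hLiL, hLLi⟩, rfl⟩
  have hc1 : IsUnit (L*W*Li) ↔ IsUnit W := by
    constructor
    · intro hu
      have hW' : W = Li*(L*W*Li)*L := by
        have h1 : Li*(L*W*Li)*L = (Li*L)*W*(Li*L) := by noncomm_ring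
        rw [h1, hLiL, one_mul, mul_one]
      rw [hW']
      exact (hLiu.mul hu).mul hLu
    · intro hu
      exact (hLu.mul hu).mul hLiu
  obtain ⟨Pm, hPm⟩ : ∃ Z : Matrix (Fin 2) (Fin 2) R, Z = !![1, 0; α*w1, 1] := ⟨_, rfl⟩
  obtain ⟨Pi, hPi⟩ : ∃ Z : Matrix (Fin 2) (Fin 2) R, Z = !![1, 0; -(α*w1), 1] := ⟨_, rfl⟩
  have hPPi : Pm * Pi = 1 := by
    rw [hPm, hPi, Matrix.mul_fin_two, Matrix.one_fin_two]
    exact eq22 (by noncomm_ring) (by noncomm_ring) (by noncomm_ring) (by noncomm_ring)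
  have hPiP : Pi * Pm = 1 := by
    rw [hPm, hPi, Matrix.mul_fin_two, Matrix.one_fin_two]
    exact eq22 (by noncomm_ring) (by noncomm_ring) (by noncomm_ring) (by noncomm_ring)
  have hPu : IsUnit Pm := ⟨⟨Pm, Pi, hPPi, hPiP⟩, rfl⟩
  have hPiu : IsUnit Pi := ⟨⟨Pi, Pm, hPiP, hPPi⟩, rfl⟩
  have hWPT : W = Pm * T := by
    rw [hW, hPm, hT, Matrix.mul_fin_two]
    refine eq22 ?_ ?_ ?_ ?_
    · noncomm_ring
    · noncomm_ring
    · have h' : (α*w1)*u1 + 1*0 = α*(w1*u1) := by noncomm_ring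
      rw [h', hw1u1, mul_one]
    · rw [hξ]
      have h' : (α*w1)*(s*(a*d3*d4p + c)) + 1*(β - α*h*(a*d3*d4p + c))
          = α*(w1*s)*(a*d3*d4p + c) + β - α*h*(a*d3*d4p + c) := by noncomm_ring
      rw [h', hw1s]
      noncomm_ring
  have hc2 : IsUnit W ↔ IsUnit T := by
    constructor
    · intro hu
      have hT' : T = Pi * W := by
        rw [hWPT, ← mul_assoc, hPiP, one_mul]
      rw [hT']
      exact hPiu.mul hu
    · intro hu
      rw [hWPT]
      exact hPu.mul hu
  have hc3 : IsUnit T ↔ IsUnit ξ := by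
    constructor
    · rintro ⟨V, hV⟩
      have hTV : T * (V⁻¹).val = 1 := by rw [← hV]; exact V.mul_inv
      have hVT : (V⁻¹).val * T = 1 := by rw [← hV]; exact V.inv_mul
      rw [hT] at hTV hVT
      have hmul : ∀ (A B : Matrix (Fin 2) (Fin 2) R) (i j : Fin 2),
          (A*B) i j = A i 0 * B 0 j + A i 1 * B 1 j := fun A B i j => by
        rw [Matrix.mul_apply, Fin.sum_univ_two]
      have hone10 : (1 : Matrix (Fin 2) (Fin 2) R) 1 0 = 0 :=
        Matrix.one_apply_ne (by decide)
      have hone11 : (1 : Matrix (Fin 2) (Fin 2) R) 1 1 = 1 := Matrix.one_apply_eq 1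
      have h10 : (V⁻¹).val 1 0 * u1 + (V⁻¹).val 1 1 * 0 = 0 := by
        have h' : ((V⁻¹).val * !![u1, s * (a * d3 * d4p + c); 0, ξ]) 1 0
            = (1 : Matrix (Fin 2) (Fin 2) R) 1 0 := by rw [hVT]
        rw [hmul, hone10] at h'
        exact h'
      have h11 : (V⁻¹).val 1 0 * (s * (a * d3 * d4p + c)) + (V⁻¹).val 1 1 * ξ = 1 := by
        have h' : ((V⁻¹).val * !![u1, s * (a * d3 * d4p + c); 0, ξ]) 1 1
            = (1 : Matrix (Fin 2) (Fin 2) R) 1 1 := by rw [hVT]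
        rw [hmul, hone11] at h'
        exact h'
      have h22 : 0 * (V⁻¹).val 0 1 + ξ * (V⁻¹).val 1 1 = 1 := by
        have h' : (!![u1, s * (a * d3 * d4p + c); 0, ξ] * (V⁻¹).val) 1 1
            = (1 : Matrix (Fin 2) (Fin 2) R) 1 1 := by rw [hTV]
        rw [hmul, hone11] at h'
        exact h'
      rw [mul_zero, add_zero] at h10
      have hv0 : (V⁻¹).val 1 0 = 0 := by
        have h' : (V⁻¹).val 1 0
            = ((V⁻¹).val 1 0 * u1) * w1 := by
          rw [mul_assoc, hu1w1, mul_one]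
        rw [h', h10, zero_mul]
      rw [hv0, zero_mul, zero_add] at h11
      rw [zero_mul, zero_add] at h22
      exact ⟨⟨ξ, (V⁻¹).val 1 1, h22, h11⟩, rfl⟩
    · rintro ⟨X, hX⟩
      refine ⟨⟨T, !![w1, -(w1*((s*(a*d3*d4p + c))*(X⁻¹).val)); 0, (X⁻¹).val], ?_, ?_⟩, rfl⟩
      · rw [hT, Matrix.mul_fin_two, Matrix.one_fin_two]
        refine eq22 ?_ ?_ ?_ ?_
        · have h' : u1*w1 + (s*(a*d3*d4p + c))*0 = u1*w1 := by noncomm_ring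
          rw [h', hu1w1]
        · have h' : u1*(-(w1*((s*(a*d3*d4p + c))*(X⁻¹).val)))
              + (s*(a*d3*d4p + c))*(X⁻¹).val
              = -((u1*w1)*((s*(a*d3*d4p + c))*(X⁻¹).val))
                + (s*(a*d3*d4p + c))*(X⁻¹).val := by noncomm_ring
          rw [h', hu1w1, one_mul, neg_add_cancel]
        · noncomm_ring
        · have h' : 0*(-(w1*((s*(a*d3*d4p + c))*(X⁻¹).val))) + ξ*(X⁻¹).val
              = ξ*(X⁻¹).val := by noncomm_ring
          rw [h', ← hX, X.mul_inv]
      · rw [hT, Matrix.mul_fin_two, Matrix.one_fin_two]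
        refine eq22 ?_ ?_ ?_ ?_
        · have h' : w1*u1 + (-(w1*((s*(a*d3*d4p + c))*(X⁻¹).val)))*0 = w1*u1 := by
            noncomm_ring
          rw [h', hw1u1]
        · have h' : w1*(s*(a*d3*d4p + c)) + (-(w1*((s*(a*d3*d4p + c))*(X⁻¹).val)))*ξ
              = w1*(s*(a*d3*d4p + c)) - w1*((s*(a*d3*d4p + c))*((X⁻¹).val*ξ)) := by
            noncomm_ring
          rw [h', ← hX, X.inv_mul, mul_one, sub_self]
        · noncomm_ring
        · have h' : (0:R)*(s*(a*d3*d4p + c)) + (X⁻¹).val*ξ = (X⁻¹).val*ξ := by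
            noncomm_ring
          rw [h', ← hX, X.inv_mul]
  exact hc1.trans (hc2.trans hc3)
end

section
/- Let R be a ring with unity and let a, b, c, d, d1, d2, d3, d4 ∈ R with d4 invertible. Let A = [[a, c], [b, d]] and D = [[d1, d3], [d2, d4]] be 2×2 matrices over R. Set s = d1 − d3*d4⁻¹*d2, assume s⁺ is a reflexive inverse of s and h is the inverse of a along s. Set u = s*a + 1 − s*s⁺, α = d2*a + d4*b, β = α*d3*d4⁻¹ + d2*c + d4*d, and ξ = β − α*h*(a*d3*d4⁻¹ + c). Then A is invertible along D (in the ring of 2×2 matrices over R) if and only if ξ is invertible in R; and in that case u is invertible and, setting x1 = ((1 − h*a)*d3*d4⁻¹ − h*c)*ξ⁻¹ and x2 = u⁻¹ − x1*α*u⁻¹, the matrix B = [[x1*d2 + x2*s, x1*d4], [ξ⁻¹*(d2 − α*h), ξ⁻¹*d4]] is the inverse of A along D. -/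
theorem unitAux {S : Type*} [Ring S] (a d dp b x y : S)
    (h1 : d*a*b = d) (h2 : b*a*d = d) (hx : b = x*d) (hy : b = d*y)
    (hdp : d*dp*d = d) :
    ∃ v : S, (d*a + 1 - d*dp) * v = 1 ∧ v * (d*a + 1 - d*dp) = 1 := by
  set u : S := d*a + 1 - d*dp with hu
  have f1 : d*dp*b = b := by
    linear_combination (norm := noncomm_ring) d*dp*hy + hdp*y - hy
  have f3 : (d*dp)*(d*dp) = d*dp := by
    linear_combination (norm := noncomm_ring) hdp*dp
  have f4 : b*dp*d = b := by
    linear_combination (norm := noncomm_ring) hx*dp*d + x*hdp - hx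
  have e_ur : u * (b*dp + 1 - d*dp) = 1 + d*a*(1 - d*dp) := by
    rw [hu]
    linear_combination (norm := noncomm_ring) h1*dp - f1*dp + f3
  have hn : (d*a*(1 - d*dp)) * (d*a*(1 - d*dp)) = 0 := by
    linear_combination (norm := noncomm_ring) - d*a*hdp*(a*(1-d*dp))
  have hur : u * ((b*dp + 1 - d*dp) * (1 - d*a*(1 - d*dp))) = 1 := by
    linear_combination (norm := noncomm_ring) e_ur*(1 - d*a*(1 - d*dp)) - hn
  have hA1 : (b*dp)*(d*a + 1 - d*dp) = b*a := by
    linear_combination (norm := noncomm_ring) f4*a - f4*dp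
  have hA2 : (1 - d*dp)*(d*a + 1 - d*dp) = 1 - d*dp := by
    linear_combination (norm := noncomm_ring) - hdp*a + f3
  have hA3 : (b*a*(1-d*dp))*(d*a + 1 - d*dp) = b*a*(1-d*dp) := by
    linear_combination (norm := noncomm_ring) b*a*hA2
  have hlu : (b*dp + 1 - d*dp - b*a*(1-d*dp)) * u = 1 := by
    rw [hu]
    linear_combination (norm := noncomm_ring) hA1 + hA2 - hA3 + h2*dp
  set l : S := b*dp + 1 - d*dp - b*a*(1-d*dp)
  set r : S := (b*dp + 1 - d*dp) * (1 - d*a*(1 - d*dp))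
  have hlr : l = r := by
    calc l = l * (u * r) := by rw [hur, mul_one]
    _ = (l * u) * r := by rw [mul_assoc]
    _ = r := by rw [hlu, one_mul]
  exact ⟨r, hur, hlr ▸ hlu⟩

set_option maxHeartbeats 2000000 in
/-- Corollary: the inverse of `A = [[a,c],[b,d]]` along `D = [[d1,d3],[d2,d4]]`
with `d4` invertible (inverse `d4i`). -/
theorem stmt11 {R : Type*} [Ring R] (a b c d d1 d2 d3 d4 d4i s sp h u α β ξ : R)
    (hd4 : d4 * d4i = 1) (hd4' : d4i * d4 = 1)
    (hs : s = d1 - d3 * d4i * d2)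
    (hsp : s * sp * s = s) (hsp' : sp * s * sp = sp)
    (hh : InvAlong a s h)
    (hu : u = s * a + 1 - s * sp)
    (hα : α = d2 * a + d4 * b)
    (hβ : β = α * d3 * d4i + d2 * c + d4 * d)
    (hξ : ξ = β - α * h * (a * d3 * d4i + c)) :
    ((∃ B : Matrix (Fin 2) (Fin 2) R,
        InvAlong (!![a, c; b, d]) (!![d1, d3; d2, d4]) B) ↔ IsUnit ξ) ∧
    (IsUnit ξ →
      IsUnit u ∧
      ∀ ξi ui x1 x2 : R, ξ * ξi = 1 → ξi * ξ = 1 → u * ui = 1 → ui * u = 1 →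
        x1 = ((1 - h * a) * d3 * d4i - h * c) * ξi →
        x2 = ui - x1 * α * ui →
        InvAlong (!![a, c; b, d]) (!![d1, d3; d2, d4])
          (!![x1 * d2 + x2 * s, x1 * d4; ξi * (d2 - α * h), ξi * d4])) := by
  obtain ⟨hsa, has, ⟨x, hhx⟩, ⟨y, hhy⟩⟩ := hh
  obtain ⟨uv, huv1, huv2⟩ := unitAux a s sp h x y hsa has hhx hhy hsp
  have huv1' : u * uv = 1 := by rw [hu]; exact huv1
  have huv2' : uv * u = 1 := by rw [hu]; exact huv2
  have hsh : u * h = s := by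
    rw [hu]
    linear_combination (norm := noncomm_ring) hsa - (s*sp)*hhy - hsp*y + hhy
  have huvs : uv * s = h := by
    linear_combination (norm := noncomm_ring) -uv*hsh + huv2'*h
  set Am := !![a, c; b, d] with hAmd
  set Dm := !![d1, d3; d2, d4] with hDmd
  set P := !![(1:R), d3*d4i; 0, 1] with hPd
  set Pi := !![(1:R), -(d3*d4i); 0, 1] with hPid
  set Q := !![(1:R), 0; d4i*d2, 1] with hQd
  set Qi := !![(1:R), 0; -(d4i*d2), 1] with hQid
  set Dl := !![s, 0; 0, d4] with hDld
  set Dp := !![sp, 0; 0, d4i] with hDpd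
  set A' := !![a, a*(d3*d4i)+c; d4i*d2*a + b, d4i*d2*(a*(d3*d4i)+c) + b*(d3*d4i) + d] with hA'd
  set U := !![u, s*(a*(d3*d4i)+c); α, β] with hUd
  have hPPi : P * Pi = 1 := by
    rw [hPd, hPid]; ext i j
    fin_cases i <;> fin_cases j <;>
      simp [Matrix.mul_apply, Fin.sum_univ_two, Matrix.one_apply]
  have hPiP : Pi * P = 1 := by
    rw [hPd, hPid]; ext i j
    fin_cases i <;> fin_cases j <;>
      simp [Matrix.mul_apply, Fin.sum_univ_two, Matrix.one_apply]
  have hQQi : Q * Qi = 1 := by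
    rw [hQd, hQid]; ext i j
    fin_cases i <;> fin_cases j <;>
      simp [Matrix.mul_apply, Fin.sum_univ_two, Matrix.one_apply]
  have hQiQ : Qi * Q = 1 := by
    rw [hQd, hQid]; ext i j
    fin_cases i <;> fin_cases j <;>
      simp [Matrix.mul_apply, Fin.sum_univ_two, Matrix.one_apply]
  have hDfac : Dm = P * Dl * Q := by
    rw [hDmd, hPd, hDld, hQd]; ext i j
    fin_cases i <;> fin_cases j <;>
      simp [Matrix.mul_apply, Fin.sum_univ_two, Matrix.one_apply]
    · linear_combination (norm := noncomm_ring) -hs - d3*hd4'*(d4i*d2)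
    · linear_combination (norm := noncomm_ring) -(d3)*hd4'
    · linear_combination (norm := noncomm_ring) -hd4*d2
  have hA'fac : A' = Q * Am * P := by
    rw [hA'd, hQd, hAmd, hPd]; ext i j
    fin_cases i <;> fin_cases j <;>
      simp [Matrix.mul_apply, Fin.sum_univ_two, Matrix.one_apply] <;>
      noncomm_ring
  have hDl1 : Dl * Dp * Dl = Dl := by
    rw [hDld, hDpd]; ext i j
    fin_cases i <;> fin_cases j <;>
      simp [Matrix.mul_apply, Fin.sum_univ_two, Matrix.one_apply]
    · exact hsp
    · linear_combination (norm := noncomm_ring) hd4*d4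
  have hUeq : Dl * A' + 1 - Dl * Dp = U := by
    rw [hDld, hA'd, hDpd, hUd]; ext i j
    fin_cases i <;> fin_cases j <;>
      simp [Matrix.mul_apply, Fin.sum_univ_two, Matrix.one_apply]
    · linear_combination (norm := noncomm_ring) -hu
    · linear_combination (norm := noncomm_ring) hd4*(d2*a) - hα
    · linear_combination (norm := noncomm_ring)
        hd4*(d2*(a*(d3*d4i)+c)) - hd4 - hβ - hα*(d3*d4i)
  have hULTgen : ∀ w : R, w * u = 1 → w * s = h →
      U = !![(1:R), 0; α*w, 1] * !![u, s*(a*(d3*d4i)+c); 0, ξ] := by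
    intro w hw1 hw2
    rw [hUd]; ext i j
    fin_cases i <;> fin_cases j <;>
      simp [Matrix.mul_apply, Fin.sum_univ_two, Matrix.one_apply]
    · linear_combination (norm := noncomm_ring) -α*hw1
    · linear_combination (norm := noncomm_ring) -hξ - α*hw2*(a*(d3*d4i)+c)
  have key : ∀ ξi ui x1 x2 : R, ξ * ξi = 1 → ξi * ξ = 1 → u * ui = 1 → ui * u = 1 →
      x1 = ((1 - h * a) * d3 * d4i - h * c) * ξi →
      x2 = ui - x1 * α * ui →
      InvAlong Am Dm
        (!![x1 * d2 + x2 * s, x1 * d4; ξi * (d2 - α * h), ξi * d4]) := by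
    intro ξi ui x1 x2 hξ1 hξ2 hu1 hu2 hx1 hx2
    have hh2 : ui * s = h := by
      linear_combination (norm := noncomm_ring) -ui*hsh + hu2*h
    set L := !![(1:R), 0; α*ui, 1] with hLd
    set Li := !![(1:R), 0; -(α*ui), 1] with hLid
    set T := !![u, s*(a*(d3*d4i)+c); 0, ξ] with hTd
    set Ti := !![ui, -(h*(a*(d3*d4i)+c)*ξi); 0, ξi] with hTid
    have hULT : U = L * T := by rw [hLd, hTd]; exact hULTgen ui hu2 hh2
    have hLLi : L * Li = 1 := by
      rw [hLd, hLid]; ext i j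
      fin_cases i <;> fin_cases j <;>
        simp [Matrix.mul_apply, Fin.sum_univ_two, Matrix.one_apply]
    have hLiL : Li * L = 1 := by
      rw [hLd, hLid]; ext i j
      fin_cases i <;> fin_cases j <;>
        simp [Matrix.mul_apply, Fin.sum_univ_two, Matrix.one_apply]
    have hTTi : T * Ti = 1 := by
      rw [hTd, hTid]; ext i j
      fin_cases i <;> fin_cases j <;>
        simp [Matrix.mul_apply, Fin.sum_univ_two, Matrix.one_apply]
      · exact hu1
      · linear_combination (norm := noncomm_ring) -hsh*((a*(d3*d4i)+c)*ξi)
      · exact hξ1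
    have hTiT : Ti * T = 1 := by
      rw [hTd, hTid]; ext i j
      fin_cases i <;> fin_cases j <;>
        simp [Matrix.mul_apply, Fin.sum_univ_two, Matrix.one_apply]
      · exact hu2
      · linear_combination (norm := noncomm_ring)
          hh2*(a*(d3*d4i)+c) - h*(a*(d3*d4i)+c)*hξ2
      · exact hξ2
    have hUUi : U * (Ti * Li) = 1 := by
      rw [hULT]
      linear_combination (norm := noncomm_ring) L*hTTi*Li + hLLi
    have hUiU : (Ti * Li) * U = 1 := by
      rw [hULT]
      linear_combination (norm := noncomm_ring) Ti*hLiL*T + hTiT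
    set Bp := !![h + h*(a*(d3*d4i)+c)*ξi*(α*h), -(h*(a*(d3*d4i)+c)*(ξi*d4));
        -(ξi*(α*h)), ξi*d4] with hBpd
    have hBpfac : Bp = (Ti * Li) * Dl := by
      rw [hBpd, hTid, hLid, hDld]; ext i j
      fin_cases i <;> fin_cases j <;>
        simp [Matrix.mul_apply, Fin.sum_univ_two, Matrix.one_apply]
      · linear_combination (norm := noncomm_ring)
          -hh2 - h*(a*(d3*d4i)+c)*ξi*α*hh2
      · noncomm_ring
      · linear_combination (norm := noncomm_ring) -ξi*α*hh2
    set Xm := !![x + h*(a*(d3*d4i)+c)*ξi*(α*x), -(h*(a*(d3*d4i)+c)*ξi);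
        -(ξi*(α*x)), ξi] with hXmd
    have hBpX : Bp = Xm * Dl := by
      rw [hBpd, hXmd, hDld]; ext i j
      fin_cases i <;> fin_cases j <;>
        simp [Matrix.mul_apply, Fin.sum_univ_two, Matrix.one_apply]
      · linear_combination (norm := noncomm_ring)
          hhx + h*(a*(d3*d4i)+c)*ξi*α*hhx
      · noncomm_ring
      · linear_combination (norm := noncomm_ring) ξi*α*hhx
    set Ym := !![y + y*(a*(d3*d4i)+c)*ξi*(α*h), -(y*(a*(d3*d4i)+c)*(ξi*d4));
        -(d4i*(ξi*(α*h))), d4i*(ξi*d4)] with hYmd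
    have hBpY : Bp = Dl * Ym := by
      rw [hBpd, hYmd, hDld]; ext i j
      fin_cases i <;> fin_cases j <;>
        simp [Matrix.mul_apply, Fin.sum_univ_two, Matrix.one_apply]
      · linear_combination (norm := noncomm_ring)
          hhy + hhy*((a*(d3*d4i)+c)*ξi*(α*h))
      · linear_combination (norm := noncomm_ring)
          hhy*((a*(d3*d4i)+c)*(ξi*d4))
      · linear_combination (norm := noncomm_ring) -hd4*(ξi*(α*h))
      · linear_combination (norm := noncomm_ring) -hd4*(ξi*d4)
    have e1 : U * Bp = Dl := by
      rw [hBpfac]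
      linear_combination (norm := noncomm_ring) hUUi*Dl
    have e2 : Dl * Dp * Bp = Bp := by
      linear_combination (norm := noncomm_ring) (Dl*Dp)*hBpY + hDl1*Ym - hBpY
    have c1 : Dl * A' * Bp = Dl := by
      linear_combination (norm := noncomm_ring) hUeq*Bp + e1 + e2
    have c2 : Bp * A' * Dl = Dl := by
      linear_combination (norm := noncomm_ring)
        hBpfac*(A'*Dl) + (Ti*Li)*hUeq*Dl + hUiU*Dl + (Ti*Li)*hDl1
    set Bg := !![x1 * d2 + x2 * s, x1 * d4; ξi * (d2 - α * h), ξi * d4] with hBgd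
    have hBgfac : Bg = P * Bp * Q := by
      rw [hBgd, hPd, hBpd, hQd]; ext i j
      fin_cases i <;> fin_cases j <;>
        simp [Matrix.mul_apply, Fin.sum_univ_two, Matrix.one_apply]
      · linear_combination (norm := noncomm_ring)
          hx2*s + hh2 - x1*α*hh2 + hx1*d2 - hx1*(α*h)
            - ((d3*d4i)*ξi - h*(a*(d3*d4i)+c)*ξi)*hd4*d2
      · linear_combination (norm := noncomm_ring) hx1*d4
      · linear_combination (norm := noncomm_ring) -ξi*hd4*d2
    refine ⟨?_, ?_, ⟨P * Xm * Pi, ?_⟩, ⟨Qi * Ym * Q, ?_⟩⟩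
    · linear_combination (norm := noncomm_ring)
        hDfac*(Am*Bg) + (P*Dl*Q*Am)*hBgfac - (P*Dl)*hA'fac*(Bp*Q) + P*c1*Q - hDfac
    · linear_combination (norm := noncomm_ring)
        hBgfac*(Am*Dm) + (P*Bp*Q*Am)*hDfac - (P*Bp)*hA'fac*(Dl*Q) + P*c2*Q - hDfac
    · linear_combination (norm := noncomm_ring)
        hBgfac + P*hBpX*Q - (P*Xm*Pi)*hDfac - (P*Xm)*hPiP*(Dl*Q)
    · linear_combination (norm := noncomm_ring)
        hBgfac + P*hBpY*Q - hDfac*(Qi*Ym*Q) - (P*Dl)*hQQi*(Ym*Q)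
  constructor
  · constructor
    · rintro ⟨B, hB1, hB2, ⟨X, hXB⟩, ⟨Y, hYB⟩⟩
      have hDlfac : Dl = Pi * Dm * Qi := by
        linear_combination (norm := noncomm_ring)
          -Pi*hDfac*Qi - hPiP*(Dl*(Q*Qi)) - Dl*hQQi
      set B2 := Pi * B * Qi with hB2d
      have g1 : Dl * A' * B2 = Dl := by
        linear_combination (norm := noncomm_ring)
          hDlfac*(A'*B2) + (Pi*Dm*Qi)*hA'fac*B2 + (Pi*Dm)*hQiQ*(Am*(P*B2))
            + (Pi*Dm*Am*P)*hB2d + (Pi*Dm*Am)*hPPi*(B*Qi) + Pi*hB1*Qi - hDlfac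
      have g2 : B2 * A' * Dl = Dl := by
        linear_combination (norm := noncomm_ring)
          hB2d*(A'*Dl) + (Pi*B)*hQiQ*(Am*(P*Dl)) + (Pi*B*Qi)*hA'fac*Dl
            + (Pi*B*Am*P)*hDlfac + (Pi*B*Am)*hPPi*(Dm*Qi) + Pi*hB2*Qi - hDlfac
      have g3 : B2 = (Pi*X*P) * Dl := by
        linear_combination (norm := noncomm_ring)
          hB2d + Pi*hXB*Qi + (Pi*X)*hDfac*Qi + (Pi*(X*(P*Dl)))*hQQi
      have g4 : B2 = Dl * (Q*Y*Qi) := by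
        linear_combination (norm := noncomm_ring)
          hB2d + Pi*hYB*Qi + Pi*hDfac*(Y*Qi) + hPiP*(Dl*(Q*(Y*Qi)))
      obtain ⟨V, hV1, hV2⟩ :=
        unitAux A' Dl Dp B2 (Pi*X*P) (Q*Y*Qi) g1 g2 g3 g4 hDl1
      have hV1' : U * V = 1 := by rw [← hUeq]; exact hV1
      have hV2' : V * U = 1 := by rw [← hUeq]; exact hV2
      set L := !![(1:R), 0; α*uv, 1] with hLd
      set Li := !![(1:R), 0; -(α*uv), 1] with hLid
      set T := !![u, s*(a*(d3*d4i)+c); 0, ξ] with hTd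
      have hULT : U = L * T := by rw [hLd, hTd]; exact hULTgen uv huv2' huvs
      have hLLi : L * Li = 1 := by
        rw [hLd, hLid]; ext i j
        fin_cases i <;> fin_cases j <;>
          simp [Matrix.mul_apply, Fin.sum_univ_two, Matrix.one_apply]
      have hLiL : Li * L = 1 := by
        rw [hLd, hLid]; ext i j
        fin_cases i <;> fin_cases j <;>
          simp [Matrix.mul_apply, Fin.sum_univ_two, Matrix.one_apply]
      have hT2 : T = Li * U := by
        rw [hULT]
        linear_combination (norm := noncomm_ring) -hLiL*T
      set W := V * L with hWd
      have hTW : T * W = 1 := by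
        rw [hWd, hT2]
        linear_combination (norm := noncomm_ring) Li*hV1'*L + hLiL
      have hWT : W * T = 1 := by
        rw [hWd, hT2]
        linear_combination (norm := noncomm_ring) V*hLLi*U + hV2'
      have eTW := congrFun (congrFun hTW 1) 1
      have eWT0 := congrFun (congrFun hWT 1) 0
      have eWT1 := congrFun (congrFun hWT 1) 1
      simp [hTd, Matrix.mul_apply, Fin.sum_univ_two, Matrix.one_apply]
        at eTW eWT0 eWT1
      have e4 : W 1 0 = 0 := by
        linear_combination (norm := noncomm_ring) eWT0*uv - W 1 0 * huv1'
      have e5 : W 1 1 * ξ = 1 := by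
        linear_combination (norm := noncomm_ring)
          eWT1 - e4*(s*(a*(d3*d4i)+c))
      exact ⟨⟨ξ, W 1 1, eTW, e5⟩, rfl⟩
    · rintro ⟨ζ, hζ⟩
      refine ⟨_, key (↑ζ⁻¹) uv _ _ ?_ ?_ huv1' huv2' rfl rfl⟩
      · rw [← hζ]; exact ζ.mul_inv
      · rw [← hζ]; exact ζ.inv_mul
  · exact fun _ => ⟨⟨⟨u, uv, huv1', huv2'⟩, rfl⟩, key⟩
end

section
/- Let R be a ring with unity and let a, b, c, d, d1, d2, d3, d4 ∈ R. Let A = [[a, c], [b, d]] and D = [[d1, d3], [d2, d4]] be 2×2 matrices over R. Assume d4⁺ is a reflexive inverse of d4; set e = 1 − d4*d4⁺, f = 1 − d4⁺*d4 and s = d1 − d3*d4⁺*d2. Assume e*d2 = 0 and d3*f = 0, s⁺ is a reflexive inverse of s, and h is the inverse of a along s. Set u = s*a + 1 − s*s⁺, α = d2*a + d4*b, β = α*d3*d4⁺ + d2*c + d4*d + e, and ξ = β − α*h*(a*d3*d4⁺ + c). Then A is invertible along D (in the ring of 2×2 matrices over R) if and only if ξ is invertible in R; and in that case u is invertible and,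 setting x1 = ((1 − h*a)*d3*d4⁺ − h*c)*ξ⁻¹ and x2 = u⁻¹ − x1*α*u⁻¹, the matrix B = [[x1*d2 + x2*s, x1*d4], [ξ⁻¹*(d2 − α*h), ξ⁻¹*d4]] is the inverse of A along D. -/
set_option maxHeartbeats 1600000

section Helpers

variable {S : Type*} [Ring S]

private lemma fin2_ext {w x y z w' x' y' z' : S} (h1 : w = w') (h2 : x = x')
    (h3 : y = y') (h4 : z = z') :
    !![w, x; y, z] = !![w', x'; y', z'] := by rw [h1, h2, h3, h4]

private lemma fin2_addsub (a1 a2 a3 a4 b1 b2 b3 b4 : S) :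
    !![a1, a2; a3, a4] + 1 - !![b1, b2; b3, b4]
      = !![a1 + 1 - b1, a2 - b2; a3 - b3, a4 + 1 - b4] := by
  rw [Matrix.one_fin_two]
  ext i j
  fin_cases i <;> fin_cases j <;>
    simp [Matrix.add_apply, Matrix.sub_apply]

private lemma l1a {a d dp h : S} (hd : d * dp * d = d) (hh : InvAlong a d h) :
    (d * a + 1 - d * dp) * (h * dp + 1 - h * a) = 1 ∧
    (h * dp + 1 - h * a) * (d * a + 1 - d * dp) = 1 := by
  obtain ⟨k1, k2, ⟨x, hx⟩, ⟨y, hy⟩⟩ := hh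
  have k3 : d * dp * h = h := by rw [hy]; linear_combination (norm := noncomm_ring) hd * y
  have k4 : h * dp * d = h := by rw [hx]; linear_combination (norm := noncomm_ring) x * hd
  constructor
  · linear_combination (norm := noncomm_ring) k1 * dp - k1 * a - k3 * dp + k3 * a
  · linear_combination (norm := noncomm_ring) k4 * a - k4 * dp - k2 * a + k2 * dp

private lemma l1b {a d dp v : S} (hd : d * dp * d = d)
    (hv1 : (d * a + 1 - d * dp) * v = 1) (hv2 : v * (d * a + 1 - d * dp) = 1) :
    InvAlong a d (v * d) := by
  have hdw : v * d = d * (1 - (a - dp) * (v * d)) := by linear_combination (norm := noncomm_ring) hv1 * d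
  have hwwi : (a * d + 1 - dp * d) * (1 - (a - dp) * (v * d)) = 1 := by
    linear_combination (norm := noncomm_ring) - (a - dp) * hv1 * d
  refine ⟨?_, ?_, ⟨v, rfl⟩, ⟨1 - (a - dp) * (v * d), hdw⟩⟩
  · linear_combination (norm := noncomm_ring) d * a * hdw + d * hwwi + hd * (1 - (a - dp) * (v * d))
  · linear_combination (norm := noncomm_ring) hv2 * d + v * hd

end Helpers

/-- Corollary: the inverse of `A = [[a,c],[b,d]]` along `D = [[d1,d3],[d2,d4]]`
with `d4` regular, `e*d2 = 0` and `d3*f = 0`. -/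
theorem stmt13 {R : Type*} [Ring R] (a b c d d1 d2 d3 d4 d4p e f s sp h u α β ξ : R)
    (hd4 : d4 * d4p * d4 = d4) (hd4' : d4p * d4 * d4p = d4p)
    (he : e = 1 - d4 * d4p) (hf : f = 1 - d4p * d4)
    (hs : s = d1 - d3 * d4p * d2)
    (hed2 : e * d2 = 0) (hd3f : d3 * f = 0)
    (hsp : s * sp * s = s) (hsp' : sp * s * sp = sp)
    (hh : InvAlong a s h)
    (hu : u = s * a + 1 - s * sp)
    (hα : α = d2 * a + d4 * b)
    (hβ : β = α * d3 * d4p + d2 * c + d4 * d + e)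
    (hξ : ξ = β - α * h * (a * d3 * d4p + c)) :
    ((∃ B : Matrix (Fin 2) (Fin 2) R,
        InvAlong (!![a, c; b, d]) (!![d1, d3; d2, d4]) B) ↔ IsUnit ξ) ∧
    (IsUnit ξ →
      IsUnit u ∧
      ∀ ξi ui x1 x2 : R, ξ * ξi = 1 → ξi * ξ = 1 → u * ui = 1 → ui * u = 1 →
        x1 = ((1 - h * a) * d3 * d4p - h * c) * ξi →
        x2 = ui - x1 * α * ui →
        InvAlong (!![a, c; b, d]) (!![d1, d3; d2, d4])
          (!![x1 * d2 + x2 * s, x1 * d4; ξi * (d2 - α * h), ξi * d4])) := by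
  obtain ⟨k1, k2, ⟨x, hx⟩, ⟨y, hy⟩⟩ := hh
  have r2 : d4 * d4p * d2 = d2 := by
    rw [he] at hed2; linear_combination (norm := noncomm_ring) -hed2
  have r3 : d3 * d4p * d4 = d3 := by
    rw [hf] at hd3f; linear_combination (norm := noncomm_ring) -hd3f
  have k3 : s * sp * h = h := by rw [hy]; linear_combination (norm := noncomm_ring) hsp * y
  have k4 : h * sp * s = h := by rw [hx]; linear_combination (norm := noncomm_ring) x * hsp
  have huv : u * (h*sp + 1 - h*a) = 1 := by
    linear_combination (norm := noncomm_ring) hu * (h*sp + 1 - h*a) + k1 * sp - k1 * a - k3 * sp + k3 * a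
  have hvu : (h*sp + 1 - h*a) * u = 1 := by
    linear_combination (norm := noncomm_ring) (h*sp + 1 - h*a) * hu + k4 * a - k4 * sp - k2 * a + k2 * sp
  have hvq : (h*sp + 1 - h*a) * (s*c - d3*d4p + s*sp*(d3*d4p)) = h*c - d3*d4p + h*a*(d3*d4p) := by
    linear_combination (norm := noncomm_ring) k4 * c + k4 * (sp*(d3*d4p)) - k2 * c - k2 * (sp*(d3*d4p))
  have hvs : (h*sp + 1 - h*a) * s = h := by
    linear_combination (norm := noncomm_ring) k4 - k2
  have hξ2 : (β - α*(d3*d4p)) - α * ((h*sp + 1 - h*a) * (s*c - d3*d4p + s*sp*(d3*d4p))) = ξ := by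
    linear_combination (norm := noncomm_ring) -hξ - α * k4 * c - α * (k4 * (sp*(d3*d4p))) + α * k2 * c + α * (k2 * (sp*(d3*d4p)))
  -- matrix facts
  have hDDp : (!![d1, d3; d2, d4] : Matrix (Fin 2) (Fin 2) R) * !![sp, -(sp*(d3*d4p)); -(d4p*(d2*sp)), d4p + d4p*(d2*(sp*(d3*d4p)))]
      = !![s*sp, d3*d4p - s*sp*(d3*d4p); 0, d4*d4p] := by
    rw [Matrix.mul_fin_two]
    exact fin2_ext (by linear_combination (norm := noncomm_ring) -hs * sp) (by linear_combination (norm := noncomm_ring) hs * (sp*(d3*d4p)))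
      (by linear_combination (norm := noncomm_ring) -r2 * sp) (by linear_combination (norm := noncomm_ring) r2 * (sp*(d3*d4p)))
  have hDreg : (!![d1, d3; d2, d4] : Matrix (Fin 2) (Fin 2) R) * !![sp, -(sp*(d3*d4p)); -(d4p*(d2*sp)), d4p + d4p*(d2*(sp*(d3*d4p)))] * !![d1, d3; d2, d4] = !![d1, d3; d2, d4] := by
    rw [hDDp, Matrix.mul_fin_two]
    exact fin2_ext (by linear_combination (norm := noncomm_ring) hsp - s*sp*hs + hs) (by linear_combination (norm := noncomm_ring) r3 - s*sp*r3)
      (by linear_combination (norm := noncomm_ring) r2) (by linear_combination (norm := noncomm_ring) hd4)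
  have hDA : (!![d1, d3; d2, d4] : Matrix (Fin 2) (Fin 2) R) * !![a, c; b, d]
      = !![d1*a + d3*b, d1*c + d3*d; d2*a + d4*b, d2*c + d4*d] := by
    rw [Matrix.mul_fin_two]
  have hU2 : (!![d1, d3; d2, d4] : Matrix (Fin 2) (Fin 2) R) * !![a, c; b, d] + 1 - !![d1, d3; d2, d4] * !![sp, -(sp*(d3*d4p)); -(d4p*(d2*sp)), d4p + d4p*(d2*(sp*(d3*d4p)))] = !![(1:R), d3*d4p; 0, 1] * !![u, (s*c - d3*d4p + s*sp*(d3*d4p)); α, (β - α*(d3*d4p))] := by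
    rw [hDA, hDDp, fin2_addsub, Matrix.mul_fin_two]
    exact fin2_ext
      (by linear_combination (norm := noncomm_ring) -hu - hs * a - d3*d4p*hα - r3 * b)
      (by linear_combination (norm := noncomm_ring) -hs * c - d3*d4p*hβ - r3 * d - d3*d4p*he + r3 * d4p)
      (by linear_combination (norm := noncomm_ring) -hα)
      (by linear_combination (norm := noncomm_ring) -hβ - he)
  have hLLi : (!![(1:R), -(d3*d4p); 0, 1] : Matrix (Fin 2) (Fin 2) R) * !![(1:R), d3*d4p; 0, 1] = 1 := by
    rw [Matrix.mul_fin_two, Matrix.one_fin_two]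
    exact fin2_ext (by noncomm_ring) (by noncomm_ring) (by noncomm_ring) (by noncomm_ring)
  have hLiL : (!![(1:R), d3*d4p; 0, 1] : Matrix (Fin 2) (Fin 2) R) * !![(1:R), -(d3*d4p); 0, 1] = 1 := by
    rw [Matrix.mul_fin_two, Matrix.one_fin_two]
    exact fin2_ext (by noncomm_ring) (by noncomm_ring) (by noncomm_ring) (by noncomm_ring)
  have hLD : (!![(1:R), -(d3*d4p); 0, 1] : Matrix (Fin 2) (Fin 2) R) * !![d1, d3; d2, d4] = !![s, 0; d2, d4] := by
    rw [Matrix.mul_fin_two]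
    exact fin2_ext (by linear_combination (norm := noncomm_ring) -hs) (by linear_combination (norm := noncomm_ring) -r3) (by noncomm_ring) (by noncomm_ring)
  -- main construction
  have main : ∀ ξi : R, ξ * ξi = 1 → ξi * ξ = 1 →
      InvAlong (!![a, c; b, d] : Matrix (Fin 2) (Fin 2) R) !![d1, d3; d2, d4] ((!![(h*sp + 1 - h*a) + (h*sp + 1 - h*a)*((s*c - d3*d4p + s*sp*(d3*d4p))*(ξi*(α*(h*sp + 1 - h*a)))), -((h*sp + 1 - h*a)*((s*c - d3*d4p + s*sp*(d3*d4p))*ξi)); -(ξi*(α*(h*sp + 1 - h*a))), ξi] * !![(1:R), -(d3*d4p); 0, 1]) * !![d1, d3; d2, d4]) := by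
    intro ξi hxi1 hxi2
    have hMN : (!![u, (s*c - d3*d4p + s*sp*(d3*d4p)); α, (β - α*(d3*d4p))] : Matrix (Fin 2) (Fin 2) R) * !![(h*sp + 1 - h*a) + (h*sp + 1 - h*a)*((s*c - d3*d4p + s*sp*(d3*d4p))*(ξi*(α*(h*sp + 1 - h*a)))), -((h*sp + 1 - h*a)*((s*c - d3*d4p + s*sp*(d3*d4p))*ξi)); -(ξi*(α*(h*sp + 1 - h*a))), ξi] = 1 := by
      rw [Matrix.mul_fin_two, Matrix.one_fin_two]
      exact fin2_ext
        (by linear_combination (norm := noncomm_ring) huv + huv * ((s*c - d3*d4p + s*sp*(d3*d4p))*(ξi*(α*(h*sp + 1 - h*a)))))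
        (by linear_combination (norm := noncomm_ring) -huv * ((s*c - d3*d4p + s*sp*(d3*d4p))*ξi))
        (by linear_combination (norm := noncomm_ring) -hξ2 * (ξi*(α*(h*sp + 1 - h*a))) - hxi1 * (α*(h*sp + 1 - h*a)))
        (by linear_combination (norm := noncomm_ring) hξ2 * ξi + hxi1)
    have hNM : (!![(h*sp + 1 - h*a) + (h*sp + 1 - h*a)*((s*c - d3*d4p + s*sp*(d3*d4p))*(ξi*(α*(h*sp + 1 - h*a)))), -((h*sp + 1 - h*a)*((s*c - d3*d4p + s*sp*(d3*d4p))*ξi)); -(ξi*(α*(h*sp + 1 - h*a))), ξi] : Matrix (Fin 2) (Fin 2) R) * !![u, (s*c - d3*d4p + s*sp*(d3*d4p)); α, (β - α*(d3*d4p))] = 1 := by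
      rw [Matrix.mul_fin_two, Matrix.one_fin_two]
      exact fin2_ext
        (by linear_combination (norm := noncomm_ring) hvu + (h*sp + 1 - h*a)*(s*c - d3*d4p + s*sp*(d3*d4p))*ξi*α*hvu)
        (by linear_combination (norm := noncomm_ring) -(h*sp + 1 - h*a)*(s*c - d3*d4p + s*sp*(d3*d4p))*ξi*hξ2 - (h*sp + 1 - h*a)*(s*c - d3*d4p + s*sp*(d3*d4p))*hxi2)
        (by linear_combination (norm := noncomm_ring) -ξi*α*hvu)
        (by linear_combination (norm := noncomm_ring) ξi*hξ2 + hxi2)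
    have hUV : (!![d1, d3; d2, d4] * !![a, c; b, d] + 1 - !![d1, d3; d2, d4] * !![sp, -(sp*(d3*d4p)); -(d4p*(d2*sp)), d4p + d4p*(d2*(sp*(d3*d4p)))]) * (!![(h*sp + 1 - h*a) + (h*sp + 1 - h*a)*((s*c - d3*d4p + s*sp*(d3*d4p))*(ξi*(α*(h*sp + 1 - h*a)))), -((h*sp + 1 - h*a)*((s*c - d3*d4p + s*sp*(d3*d4p))*ξi)); -(ξi*(α*(h*sp + 1 - h*a))), ξi] * !![(1:R), -(d3*d4p); 0, 1]) = 1 := by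
      rw [hU2]
      calc !![(1:R), d3*d4p; 0, 1] * !![u, (s*c - d3*d4p + s*sp*(d3*d4p)); α, (β - α*(d3*d4p))] * (!![(h*sp + 1 - h*a) + (h*sp + 1 - h*a)*((s*c - d3*d4p + s*sp*(d3*d4p))*(ξi*(α*(h*sp + 1 - h*a)))), -((h*sp + 1 - h*a)*((s*c - d3*d4p + s*sp*(d3*d4p))*ξi)); -(ξi*(α*(h*sp + 1 - h*a))), ξi] * !![(1:R), -(d3*d4p); 0, 1]) = !![(1:R), d3*d4p; 0, 1] * ((!![u, (s*c - d3*d4p + s*sp*(d3*d4p)); α, (β - α*(d3*d4p))] * !![(h*sp + 1 - h*a) + (h*sp + 1 - h*a)*((s*c - d3*d4p + s*sp*(d3*d4p))*(ξi*(α*(h*sp + 1 - h*a)))), -((h*sp + 1 - h*a)*((s*c - d3*d4p + s*sp*(d3*d4p))*ξi)); -(ξi*(α*(h*sp + 1 - h*a))), ξi]) * !![(1:R), -(d3*d4p); 0, 1]) := by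
            simp only [mul_assoc]
        _ = 1 := by rw [hMN, one_mul, hLiL]
    have hVU : (!![(h*sp + 1 - h*a) + (h*sp + 1 - h*a)*((s*c - d3*d4p + s*sp*(d3*d4p))*(ξi*(α*(h*sp + 1 - h*a)))), -((h*sp + 1 - h*a)*((s*c - d3*d4p + s*sp*(d3*d4p))*ξi)); -(ξi*(α*(h*sp + 1 - h*a))), ξi] * !![(1:R), -(d3*d4p); 0, 1]) * (!![d1, d3; d2, d4] * !![a, c; b, d] + 1 - !![d1, d3; d2, d4] * !![sp, -(sp*(d3*d4p)); -(d4p*(d2*sp)), d4p + d4p*(d2*(sp*(d3*d4p)))]) = 1 := by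
      rw [hU2]
      calc !![(h*sp + 1 - h*a) + (h*sp + 1 - h*a)*((s*c - d3*d4p + s*sp*(d3*d4p))*(ξi*(α*(h*sp + 1 - h*a)))), -((h*sp + 1 - h*a)*((s*c - d3*d4p + s*sp*(d3*d4p))*ξi)); -(ξi*(α*(h*sp + 1 - h*a))), ξi] * !![(1:R), -(d3*d4p); 0, 1] * (!![(1:R), d3*d4p; 0, 1] * !![u, (s*c - d3*d4p + s*sp*(d3*d4p)); α, (β - α*(d3*d4p))]) = !![(h*sp + 1 - h*a) + (h*sp + 1 - h*a)*((s*c - d3*d4p + s*sp*(d3*d4p))*(ξi*(α*(h*sp + 1 - h*a)))), -((h*sp + 1 - h*a)*((s*c - d3*d4p + s*sp*(d3*d4p))*ξi)); -(ξi*(α*(h*sp + 1 - h*a))), ξi] * ((!![(1:R), -(d3*d4p); 0, 1] * !![(1:R), d3*d4p; 0, 1]) * !![u, (s*c - d3*d4p + s*sp*(d3*d4p)); α, (β - α*(d3*d4p))]) := by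
            simp only [mul_assoc]
        _ = 1 := by rw [hLLi, one_mul, hNM]
    exact l1b hDreg hUV hVU
  refine ⟨⟨?_, ?_⟩, ?_⟩
  · -- forward: existence → IsUnit ξ
    rintro ⟨B, hB⟩
    obtain ⟨hUW, hWU⟩ := l1a hDreg hB
    set W : Matrix (Fin 2) (Fin 2) R := B * !![sp, -(sp*(d3*d4p)); -(d4p*(d2*sp)), d4p + d4p*(d2*(sp*(d3*d4p)))] + 1 - B * !![a, c; b, d] with hW
    rw [hU2] at hUW hWU
    have e1 : (!![u, (s*c - d3*d4p + s*sp*(d3*d4p)); α, (β - α*(d3*d4p))] : Matrix (Fin 2) (Fin 2) R) * W = !![(1:R), -(d3*d4p); 0, 1] := by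
      calc (!![u, (s*c - d3*d4p + s*sp*(d3*d4p)); α, (β - α*(d3*d4p))] : Matrix (Fin 2) (Fin 2) R) * W = !![(1:R), -(d3*d4p); 0, 1] * ((!![(1:R), d3*d4p; 0, 1] * !![u, (s*c - d3*d4p + s*sp*(d3*d4p)); α, (β - α*(d3*d4p))]) * W) := by
            simp only [← mul_assoc]; rw [hLLi, one_mul]
        _ = !![(1:R), -(d3*d4p); 0, 1] := by rw [hUW, mul_one]
    have h1 : (!![u, (s*c - d3*d4p + s*sp*(d3*d4p)); α, (β - α*(d3*d4p))] : Matrix (Fin 2) (Fin 2) R) * (W * !![(1:R), d3*d4p; 0, 1]) = 1 := by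
      rw [← mul_assoc, e1, hLLi]
    have h2 : (W * !![(1:R), d3*d4p; 0, 1]) * (!![u, (s*c - d3*d4p + s*sp*(d3*d4p)); α, (β - α*(d3*d4p))] : Matrix (Fin 2) (Fin 2) R) = 1 := by
      rw [mul_assoc]; exact hWU
    have hEE : (!![(1:R), 0; -(α*(h*sp + 1 - h*a)), 1] : Matrix (Fin 2) (Fin 2) R) * !![(1:R), 0; α*(h*sp + 1 - h*a), 1] = 1 := by
      rw [Matrix.mul_fin_two, Matrix.one_fin_two]
      exact fin2_ext (by noncomm_ring) (by noncomm_ring) (by noncomm_ring) (by noncomm_ring)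
    have hEE' : (!![(1:R), 0; α*(h*sp + 1 - h*a), 1] : Matrix (Fin 2) (Fin 2) R) * !![(1:R), 0; -(α*(h*sp + 1 - h*a)), 1] = 1 := by
      rw [Matrix.mul_fin_two, Matrix.one_fin_two]
      exact fin2_ext (by noncomm_ring) (by noncomm_ring) (by noncomm_ring) (by noncomm_ring)
    have hT : (!![(1:R), 0; -(α*(h*sp + 1 - h*a)), 1] : Matrix (Fin 2) (Fin 2) R) * !![u, (s*c - d3*d4p + s*sp*(d3*d4p)); α, (β - α*(d3*d4p))] = !![u, (s*c - d3*d4p + s*sp*(d3*d4p)); 0, ξ] := by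
      rw [Matrix.mul_fin_two]
      exact fin2_ext (by noncomm_ring) (by noncomm_ring)
        (by linear_combination (norm := noncomm_ring) -α * hvu) (by linear_combination (norm := noncomm_ring) hξ2)
    set K : Matrix (Fin 2) (Fin 2) R := (W * !![(1:R), d3*d4p; 0, 1]) * !![(1:R), 0; α*(h*sp + 1 - h*a), 1] with hK
    have hTK : (!![u, (s*c - d3*d4p + s*sp*(d3*d4p)); 0, ξ] : Matrix (Fin 2) (Fin 2) R) * K = 1 := by
      rw [← hT, hK]
      calc (!![(1:R), 0; -(α*(h*sp + 1 - h*a)), 1] * !![u, (s*c - d3*d4p + s*sp*(d3*d4p)); α, (β - α*(d3*d4p))]) * ((W * !![(1:R), d3*d4p; 0, 1]) * !![(1:R), 0; α*(h*sp + 1 - h*a), 1])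
          = !![(1:R), 0; -(α*(h*sp + 1 - h*a)), 1] * ((!![u, (s*c - d3*d4p + s*sp*(d3*d4p)); α, (β - α*(d3*d4p))] * (W * !![(1:R), d3*d4p; 0, 1])) * !![(1:R), 0; α*(h*sp + 1 - h*a), 1]) := by simp only [mul_assoc]
        _ = 1 := by rw [h1, one_mul, hEE]
    have hKT : K * (!![u, (s*c - d3*d4p + s*sp*(d3*d4p)); 0, ξ] : Matrix (Fin 2) (Fin 2) R) = 1 := by
      rw [← hT, hK]
      calc ((W * !![(1:R), d3*d4p; 0, 1]) * !![(1:R), 0; α*(h*sp + 1 - h*a), 1]) * (!![(1:R), 0; -(α*(h*sp + 1 - h*a)), 1] * !![u, (s*c - d3*d4p + s*sp*(d3*d4p)); α, (β - α*(d3*d4p))])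
          = (W * !![(1:R), d3*d4p; 0, 1]) * ((!![(1:R), 0; α*(h*sp + 1 - h*a), 1] * !![(1:R), 0; -(α*(h*sp + 1 - h*a)), 1]) * !![u, (s*c - d3*d4p + s*sp*(d3*d4p)); α, (β - α*(d3*d4p))]) := by simp only [mul_assoc]
        _ = 1 := by rw [hEE', one_mul, h2]
    have e21 : K 1 0 * u = 0 := by
      have h' : (K * (!![u, (s*c - d3*d4p + s*sp*(d3*d4p)); 0, ξ] : Matrix (Fin 2) (Fin 2) R)) 1 0
          = (1 : Matrix (Fin 2) (Fin 2) R) 1 0 := by rw [hKT]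
      simpa [Matrix.mul_apply, Fin.sum_univ_two, Matrix.one_apply] using h'
    have e20 : K 1 0 = 0 := by
      calc K 1 0 = K 1 0 * (u * (h*sp + 1 - h*a)) := by rw [huv, mul_one]
        _ = (K 1 0 * u) * (h*sp + 1 - h*a) := by rw [mul_assoc]
        _ = 0 := by rw [e21, zero_mul]
    have e22 : K 1 0 * (s*c - d3*d4p + s*sp*(d3*d4p)) + K 1 1 * ξ = 1 := by
      have h' : (K * (!![u, (s*c - d3*d4p + s*sp*(d3*d4p)); 0, ξ] : Matrix (Fin 2) (Fin 2) R)) 1 1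
          = (1 : Matrix (Fin 2) (Fin 2) R) 1 1 := by rw [hKT]
      simpa [Matrix.mul_apply, Fin.sum_univ_two, Matrix.one_apply] using h'
    have e22' : K 1 1 * ξ = 1 := by rw [e20, zero_mul, zero_add] at e22; exact e22
    have e22'' : ξ * K 1 1 = 1 := by
      have h' : ((!![u, (s*c - d3*d4p + s*sp*(d3*d4p)); 0, ξ] : Matrix (Fin 2) (Fin 2) R) * K) 1 1
          = (1 : Matrix (Fin 2) (Fin 2) R) 1 1 := by rw [hTK]
      simpa [Matrix.mul_apply, Fin.sum_univ_two, Matrix.one_apply] using h'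
    exact ⟨⟨ξ, K 1 1, e22'', e22'⟩, rfl⟩
  · -- backward: IsUnit ξ → existence
    intro hxi
    obtain ⟨ζ, hζ⟩ := hxi
    exact ⟨_, main ↑ζ⁻¹ (by rw [← hζ]; exact ζ.mul_inv) (by rw [← hζ]; exact ζ.inv_mul)⟩
  · -- explicit formula
    intro _
    refine ⟨⟨⟨u, (h*sp + 1 - h*a), huv, hvu⟩, rfl⟩, ?_⟩
    intro ξi ui x1 x2 hξi1 hξi2 hui1 hui2 hx1 hx2
    have m := main ξi hξi1 hξi2
    have hui0 : ui = (h*sp + 1 - h*a) := by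
      calc ui = ui * (u * (h*sp + 1 - h*a)) := by rw [huv, mul_one]
        _ = (ui * u) * (h*sp + 1 - h*a) := by rw [mul_assoc]
        _ = (h*sp + 1 - h*a) := by rw [hui2, one_mul]
    have hx1' : x1 = -((h*sp + 1 - h*a)*((s*c - d3*d4p + s*sp*(d3*d4p))*ξi)) := by
      rw [hx1]; linear_combination (norm := noncomm_ring) hvq * ξi
    have hx2' : x2 = (h*sp + 1 - h*a) - x1*(α*(h*sp + 1 - h*a)) := by
      rw [hx2, hui0]; noncomm_ring
    have hBeq : (!![(h*sp + 1 - h*a) + (h*sp + 1 - h*a)*((s*c - d3*d4p + s*sp*(d3*d4p))*(ξi*(α*(h*sp + 1 - h*a)))), -((h*sp + 1 - h*a)*((s*c - d3*d4p + s*sp*(d3*d4p))*ξi)); -(ξi*(α*(h*sp + 1 - h*a))), ξi] * !![(1:R), -(d3*d4p); 0, 1]) * (!![d1, d3; d2, d4] : Matrix (Fin 2) (Fin 2) R)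
        = !![x1 * d2 + x2 * s, x1 * d4; ξi * (d2 - α * h), ξi * d4] := by
      rw [mul_assoc, hLD, Matrix.mul_fin_two]
      exact fin2_ext
        (by linear_combination (norm := noncomm_ring) -hx1' * d2 - hx2' * s + hx1' * (α*((h*sp + 1 - h*a)*s)))
        (by linear_combination (norm := noncomm_ring) -hx1' * d4)
        (by linear_combination (norm := noncomm_ring) -ξi*α*hvs)
        (by noncomm_ring)
    rw [hBeq] at m
    exact m
end

section
/- Let R be a ring with unity, let p, a, q, m ∈ R, let m' ∈ R satisfy m*m'*m = m, and suppose there exist p', q' ∈ R with p'*p*m = m and m*q*q' = m. If there exist x, y ∈ R (in the ring generated by R with 1) such that p*m*q = x*(p*m*q)*a*(p*m*q) = (p*m*q)*a*(p*m*q)*y, then the element m*q*a*p*m*m' is invertible in the corner ring (m*m')R(m*m'), i.e., there exists z ∈ R with (m*m')*z*(m*m') = z, (m*q*a*p*m*m')*z = m*m' and z*(m*q*a*p*m*m') = m*m'. -/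
/-- Key step in Theorem 3: if `p*m*q ℋ p*m*q*a*p*m*q`, then `m*q*a*p*m*m'` is
invertible in the corner ring `(m*m')R(m*m')`. -/
theorem stmt14 {R : Type*} [Ring R] (p a q m m' p' q' : R)
    (hm : m * m' * m = m) (hp : p' * p * m = m) (hq : m * q * q' = m)
    (hxy : ∃ x y : R, p * m * q = x * (p * m * q) * a * (p * m * q) ∧
        p * m * q = (p * m * q) * a * (p * m * q) * y) :
    ∃ z : R, (m * m') * z * (m * m') = z ∧
      (m * q * a * p * (m * m')) * z = m * m' ∧
      z * (m * q * a * p * (m * m')) = m * m' := by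
  obtain ⟨x, y, h1, h2⟩ := hxy
  have hmT : ∀ t : R, m * (m' * (m * t)) = m * t := fun t => by
    rw [← mul_assoc, ← mul_assoc, hm]
  have hpT : ∀ t : R, p' * (p * (m * t)) = m * t := fun t => by
    rw [← mul_assoc, ← mul_assoc, hp]
  have hqT : ∀ t : R, m * (q * (q' * t)) = m * t := fun t => by
    rw [← mul_assoc, ← mul_assoc, hq]
  have hm0 : m * (m' * m) = m := by rw [← mul_assoc, hm]
  have hp0 : p' * (p * m) = m := by rw [← mul_assoc, hp]
  have hq0 : m * (q * q') = m := by rw [← mul_assoc, hq]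
  have hAT : ∀ t : R, m * (q * (a * (p * (m * (q * (y * (q' * t))))))) = m * t := fun t => by
    have := congrArg (fun s => p' * s * (q' * t)) h2
    simp only [mul_assoc] at this
    simp only [hpT, hqT, hmT, hp0, hq0, hm0] at this
    exact this.symm
  have hBT : ∀ t : R, p' * (x * (p * (m * (q * (a * (p * (m * t))))))) = m * t := fun t => by
    have := congrArg (fun s => p' * s * (q' * t)) h1
    simp only [mul_assoc] at this
    simp only [hpT, hqT, hmT, hp0, hq0, hm0] at this
    exact this.symm
  set z : R := m * q * y * q' * m' * (m * m') with hz
  set z2 : R := m * m' * (p' * x * p) * (m * m') with hz2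
  have hgz : (m * q * a * p * (m * m')) * z = m * m' := by
    rw [hz]; simp only [mul_assoc]
    simp only [hmT, hAT, hm0]
  have hz2g : z2 * (m * q * a * p * (m * m')) = m * m' := by
    rw [hz2]; simp only [mul_assoc]
    simp only [hmT, hBT, hm0]
  have hez : m * m' * z = z := by
    rw [hz]; simp only [mul_assoc]; simp only [hmT]
  have hz2e : z2 * (m * m') = z2 := by
    rw [hz2]; simp only [mul_assoc]; simp only [hmT, hm0]
  have hzz2 : z = z2 := by
    have h3 : z2 * ((m * q * a * p * (m * m')) * z) =
        (z2 * (m * q * a * p * (m * m'))) * z := (mul_assoc _ _ _).symm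
    rw [hgz, hz2g, hz2e, hez] at h3
    exact h3.symm
  refine ⟨z, ?_, hgz, ?_⟩
  · rw [hez, hz]; simp only [mul_assoc]; simp only [hmT, hm0]
  · rw [hzz2, hz2g]
end
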